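/- arXiv:1412.4347 — 13 statements merged into one kernel-verified Lean document; each statement's English description precedes it below -/
import Mathlib

section
/- The function q is even, i.e. q(-s) = q(s) for all s ∈ ℝ. -/
/-!
Since `q > 0`, the equation can be solved for `q''`: it reads `q'' = F(s, q, q')` with
`F(s, x, y) = -a s y - μ - s y / (3x)`, which is `C¹` where `x ≠ 0` and satisfies
`F(-s, x, -y) = F(s, x, y)`. Hence `s ↦ q(-s)` solves the same equation with the same data
`(q(0), 0)` at `s = 0`, and uniqueness for the first-order system in `(q, q')` gives `q(-s) = q(s)`.
-/

open Filter Function Set Topology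

section Uniqueness

variable {E : Type*} [NormedAddCommGroup E] [NormedSpace ℝ E]

/-- The coincidence set of the two solutions is closed, and it is open by local uniqueness, a `C¹`
map being Lipschitz near each point. -/
theorem ODE_solution_unique_of_contDiffAt {v : ℝ → E → E} {f g : ℝ → E} {t₀ : ℝ}
    (hv : ∀ t, ContDiffAt ℝ 1 (uncurry v) (t, f t))
    (hf : ∀ t, HasDerivAt f (v t (f t)) t) (hg : ∀ t, HasDerivAt g (v t (g t)) t)
    (heq : f t₀ = g t₀) : f = g := by
  have hf_cont : Continuous f := continuous_iff_continuousAt.2 fun t ↦ (hf t).continuousAt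
  have hg_cont : Continuous g := continuous_iff_continuousAt.2 fun t ↦ (hg t).continuousAt
  have hopen : IsOpen {t | f t = g t} := by
    refine isOpen_iff_mem_nhds.2 fun t₁ (ht₁ : f t₁ = g t₁) ↦ ?_
    obtain ⟨K, N, hN, hLip⟩ := (hv t₁).exists_lipschitzOnWith
    have hN_f : ∀ᶠ t in 𝓝 t₁, (t, f t) ∈ N :=
      (continuous_id.prodMk hf_cont).continuousAt.preimage_mem_nhds hN
    have hN_g : ∀ᶠ t in 𝓝 t₁, (t, g t) ∈ N :=
      (continuous_id.prodMk hg_cont).continuousAt.preimage_mem_nhds (ht₁ ▸ hN)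
    have hslice : ∀ t, LipschitzOnWith K (v t) (Prod.mk t ⁻¹' N) := fun t ↦
      mul_one K ▸ hLip.comp (LipschitzWith.prodMk_left t).lipschitzOnWith (mapsTo_preimage _ _)
    exact ODE_solution_unique_of_eventually (s := fun t ↦ Prod.mk t ⁻¹' N)
      (.of_forall hslice) (hN_f.mono fun t ht ↦ ⟨hf t, ht⟩)
      (hN_g.mono fun t ht ↦ ⟨hg t, ht⟩) ht₁
  have hclopen : IsClopen {t | f t = g t} := ⟨isClosed_eq hf_cont hg_cont, hopen⟩
  exact funext <| eq_univ_iff_forall.1 (hclopen.eq_univ ⟨t₀, heq⟩)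

end Uniqueness

theorem ODE_solution_even_of_reflection_invariant {F : ℝ → ℝ × ℝ → ℝ} {q q' : ℝ → ℝ}
    (hF : ∀ t x y, F (-t) (x, -y) = F t (x, y))
    (hF_smooth : ∀ t, ContDiffAt ℝ 1 (uncurry F) (t, (q t, q' t)))
    (hq : ∀ t, HasDerivAt q (q' t) t) (hq' : ∀ t, HasDerivAt q' (F t (q t, q' t)) t)
    (hq'0 : q' 0 = 0) : Function.Even q := by
  let v : ℝ → ℝ × ℝ → ℝ × ℝ := fun t p ↦ (p.2, F t p)
  have hv : ∀ t, ContDiffAt ℝ 1 (uncurry v) (t, (q t, q' t)) := fun t ↦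
    (contDiffAt_snd.comp _ contDiffAt_snd).prodMk (hF_smooth t)
  have hreflect : ∀ t, HasDerivAt (fun t ↦ (q (-t), -q' (-t)))
      (v t (q (-t), -q' (-t))) t := fun t ↦ by
    have h₁ := (hq (-t)).comp t (hasDerivAt_neg t)
    have h₂ := ((hq' (-t)).comp t (hasDerivAt_neg t)).neg
    simp only [mul_neg, mul_one, neg_neg, v, ← hF (-t)] at h₁ h₂ ⊢
    exact h₁.prodMk h₂
  have h := ODE_solution_unique_of_contDiffAt (t₀ := 0) hv (fun t ↦ (hq t).prodMk (hq' t))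
    hreflect (by simp [hq'0])
  exact fun t ↦ congrArg Prod.fst (congrFun h t).symm

theorem stmt_1_general (a μ : ℝ)
    (q : ℝ → ℝ) (hq : ContDiff ℝ 2 q)
    (hode : ∀ s : ℝ, deriv (deriv q) s * q s + a * s * deriv q s * q s
      + μ * q s + (1 / 3) * s * deriv q s = 0)
    (hq0' : deriv q 0 = 0)
    (hpos : ∀ s : ℝ, 0 < q s) :
    ∀ s : ℝ, q (-s) = q s := by
  have hq₁ : ContDiff ℝ 1 (deriv q) := ((contDiff_succ_iff_deriv (n := 1)).mp hq).2.2
  let F : ℝ → ℝ × ℝ → ℝ := fun t p ↦ -(a * t * p.2) - μ - t * p.2 / (3 * p.1)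
  refine ODE_solution_even_of_reflection_invariant (F := F) (fun t x y ↦ by ring)
    (fun t ↦ ?_) (fun t ↦ (hq.differentiable (by norm_num) t).hasDerivAt) (fun t ↦ ?_) hq0'
  · have : 3 * q t ≠ 0 := by have := hpos t; positivity
    fun_prop (disch := assumption)
  · refine (hq₁.differentiable one_ne_zero t).hasDerivAt.congr_deriv ?_
    have := (hpos t).ne'
    simp only [F]
    field_simp
    linear_combination 3 * hode t

theorem stmt_1 (a μ A : ℝ) (ha : 0 < a) (hμ : 1 / 3 < μ) (hA : 0 < A)
    (q : ℝ → ℝ) (hq : ContDiff ℝ 2 q)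
    (hode : ∀ s : ℝ, deriv (deriv q) s * q s + a * s * deriv q s * q s
      + μ * q s + (1 / 3) * s * deriv q s = 0)
    (hq0 : q 0 = A) (hq0' : deriv q 0 = 0)
    (hpos : ∀ s : ℝ, 0 < q s) :
    ∀ s : ℝ, q (-s) = q s :=
  stmt_1_general a μ q hq hode hq0' hpos
end

section
/- The limit of q(s) as s → ∞ is 0. -/
/-!
Write `u = q'`. Where `u` vanishes the equation gives `u' = -μ < 0`, so `u ≤ 0` on `[0, ∞)` and
`q` decreases there. If `q` stayed above some `c > 0`, then `u ≤ 0` and `q ≥ c` turn the equation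
into `u' + k s u ≤ -μ` with `k = a + 1/(3c)`. Comparing with the barrier `-(μ/2) s / (1 + k s²)`
gives `u(s) ≤ -μ / (2 (1 + k) s)` for `s ≥ 1`, hence `q(s) ≤ q(1) - μ / (2 (1 + k)) · log s`,
which eventually becomes negative.
-/

open Filter Real Set

theorem le_of_hasDerivAt_lt_boundary {f f' B B' : ℝ → ℝ} {a x : ℝ}
    (hf : ∀ y ≥ a, HasDerivAt f (f' y) y) (hB : ∀ y ≥ a, HasDerivAt B (B' y) y)
    (ha : f a ≤ B a) (bound : ∀ y ≥ a, f y = B y → f' y < B' y) (hx : a ≤ x) :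
    f x ≤ B x :=
  image_le_of_deriv_right_lt_deriv_boundary'
    (fun y hy => (hf y hy.1).continuousAt.continuousWithinAt)
    (fun y hy => (hf y hy.1).hasDerivWithinAt) ha
    (fun y hy => (hB y hy.1).continuousAt.continuousWithinAt)
    (fun y hy => (hB y hy.1).hasDerivWithinAt) (fun y hy => bound y hy.1) ⟨hx, le_rfl⟩

theorem le_sub_mul_log_of_deriv_le {f f' : ℝ → ℝ} {c x : ℝ}
    (hf : ∀ y ≥ 1, HasDerivAt f (f' y) y) (hf' : ∀ y ≥ 1, f' y ≤ -c / y) (hx : 1 ≤ x) :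
    f x ≤ f 1 - c * log x := by
  have hB : ∀ y ≥ (1 : ℝ), HasDerivAt (fun y => f 1 - c * log y) (-(c * y⁻¹)) y := fun y hy =>
    ((hasDerivAt_log (by positivity)).const_mul c).const_sub (f 1)
  refine image_le_of_deriv_right_le_deriv_boundary
    (fun y hy => (hf y hy.1).continuousAt.continuousWithinAt)
    (fun y hy => (hf y hy.1).hasDerivWithinAt) (by simp)
    (fun y hy => (hB y hy.1).continuousAt.continuousWithinAt)
    (fun y hy => (hB y hy.1).hasDerivWithinAt) (fun y hy => ?_) ⟨hx, le_rfl⟩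
  simpa [div_eq_mul_inv] using hf' y hy.1

/-- With `μ` instead of `μ / 2` the barrier would be tangent to `u` at `s = 0`; halving makes the
comparison strict there. -/
theorem le_neg_div_of_deriv_add_mul_le {u u' : ℝ → ℝ} {k μ s : ℝ} (hk : 0 ≤ k) (hμ : 0 < μ)
    (hu : ∀ t ≥ 0, HasDerivAt u (u' t) t) (hu0 : u 0 ≤ 0)
    (hineq : ∀ t ≥ 0, u' t + k * t * u t ≤ -μ) (hs : 0 ≤ s) :
    u s ≤ -(μ / 2) * s / (1 + k * s ^ 2) := by
  have hD : ∀ t : ℝ, 0 < 1 + k * t ^ 2 := fun t => by positivity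
  have hB : ∀ t : ℝ, HasDerivAt (fun t => -(μ / 2) * t / (1 + k * t ^ 2))
      (-(μ / 2) * (1 - k * t ^ 2) / (1 + k * t ^ 2) ^ 2) t := fun t => by
    refine (((hasDerivAt_id' t).const_mul (-(μ / 2))).div
      (((hasDerivAt_pow 2 t).const_mul k).const_add 1) (hD t).ne').congr_deriv ?_
    ring
  refine le_of_hasDerivAt_lt_boundary hu (fun t _ => hB t) (by simpa using hu0)
    (fun t ht hut => ?_) hs
  have h := hineq t ht
  rw [hut] at h
  rw [lt_div_iff₀ (pow_pos (hD t) 2)]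
  have h₁ : u' t * (1 + k * t ^ 2) ≤ -μ * (1 + k * t ^ 2) + k * t ^ 2 * (μ / 2) := by
    have := mul_le_mul_of_nonneg_right h (hD t).le
    field_simp at this ⊢
    nlinarith [hD t]
  have h₂ := mul_le_mul_of_nonneg_right h₁ (hD t).le
  have hx : 0 ≤ k * t ^ 2 := by positivity
  nlinarith [mul_nonneg hμ.le hx, mul_nonneg hμ.le (mul_nonneg hx hx)]

section ODE

variable {a μ : ℝ} {q : ℝ → ℝ}

theorem deriv_nonpos_of_ode (hμ : 0 < μ) (hdu : Differentiable ℝ (deriv q))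
    (hode : ∀ s : ℝ, deriv (deriv q) s * q s + a * s * deriv q s * q s
      + μ * q s + (1 / 3) * s * deriv q s = 0)
    (hpos : ∀ s : ℝ, 0 < q s) (hq0' : deriv q 0 = 0) {s : ℝ} (hs : 0 ≤ s) :
    deriv q s ≤ 0 := by
  refine le_of_hasDerivAt_lt_boundary (B := fun _ => 0) (B' := fun _ => 0)
    (fun t _ => (hdu t).hasDerivAt) (fun t _ => hasDerivAt_const t 0) hq0'.le
    (fun t _ ht => ?_) hs
  have h := hode t
  rw [ht] at h
  nlinarith [hpos t]

theorem exists_lt_of_ode (ha : 0 < a) (hμ : 0 < μ) (hdq : Differentiable ℝ q)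
    (hdu : Differentiable ℝ (deriv q))
    (hode : ∀ s : ℝ, deriv (deriv q) s * q s + a * s * deriv q s * q s
      + μ * q s + (1 / 3) * s * deriv q s = 0)
    (hpos : ∀ s : ℝ, 0 < q s) (hq0' : deriv q 0 = 0) {c : ℝ} (hc : 0 < c) :
    ∃ s ≥ 0, q s < c := by
  by_contra! hqc
  set k := a + 1 / (3 * c) with hk_def
  have hk : 0 < k := by positivity
  have hineq : ∀ s ≥ 0, deriv (deriv q) s + k * s * deriv q s ≤ -μ := by
    intro s hs
    have hsu : s * deriv q s ≤ 0 :=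
      mul_nonpos_of_nonneg_of_nonpos hs (deriv_nonpos_of_ode hμ hdu hode hpos hq0' hs)
    set X := deriv (deriv q) s + a * s * deriv q s + μ
    have hX : X * q s = -(1 / 3) * (s * deriv q s) := by linear_combination hode s
    have hX0 : 0 ≤ X := nonneg_of_mul_nonneg_left (by linarith) (hpos s)
    have hXc : X * c ≤ X * q s := mul_le_mul_of_nonneg_left (hqc s hs) hX0
    have : X + s * deriv q s / (3 * c) ≤ 0 := by
      rw [← sub_nonpos]
      field_simp
      linarith
    simp only [hk_def, X] at this ⊢
    linear_combination this
  set ν := μ / (2 * (1 + k))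
  have hν : 0 < ν := by positivity
  have hdecay : ∀ s ≥ 1, deriv q s ≤ -ν / s := by
    intro s hs
    calc deriv q s ≤ -(μ / 2) * s / (1 + k * s ^ 2) :=
          le_neg_div_of_deriv_add_mul_le hk.le hμ (fun t _ => (hdu t).hasDerivAt) hq0'.le hineq
            (by linarith)
      _ ≤ -ν / s := by
          rw [div_le_div_iff₀ (by positivity) (by positivity)]
          simp only [ν]
          field_simp
          nlinarith [mul_pos hμ hk, mul_nonneg hμ.le (show 0 ≤ s ^ 2 - 1 by nlinarith)]
  have hlog := le_sub_mul_log_of_deriv_le (fun t _ => (hdq t).hasDerivAt) hdecay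
    (one_le_exp (div_pos (hpos 1) hν).le)
  rw [log_exp, mul_div_cancel₀ _ hν.ne', sub_self] at hlog
  linarith [hpos (exp (q 1 / ν))]

end ODE

theorem stmt_3_general (a μ : ℝ) (ha : 0 < a) (hμ : 1 / 3 < μ)
    (q : ℝ → ℝ) (hq : ContDiff ℝ 2 q)
    (hode : ∀ s : ℝ, deriv (deriv q) s * q s + a * s * deriv q s * q s
      + μ * q s + (1 / 3) * s * deriv q s = 0)
    (hq0' : deriv q 0 = 0)
    (hpos : ∀ s : ℝ, 0 < q s) :
    Tendsto q atTop (nhds 0) := by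
  have hμ0 : 0 < μ := by linarith
  have hdq : Differentiable ℝ q := hq.differentiable (by norm_num)
  have hdu : Differentiable ℝ (deriv q) :=
    (contDiff_succ_iff_deriv.mp (hq : ContDiff ℝ (1 + 1) q)).2.2.differentiable one_ne_zero
  have hanti : AntitoneOn q (Ici 0) :=
    antitoneOn_of_deriv_nonpos (convex_Ici 0) hdq.continuous.continuousOn hdq.differentiableOn
      fun s hs => deriv_nonpos_of_ode hμ0 hdu hode hpos hq0' (interior_subset hs)
  refine tendsto_order.2 ⟨fun b hb => Eventually.of_forall fun s => hb.trans (hpos s),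
    fun b hb => ?_⟩
  obtain ⟨s₀, hs₀, hlt⟩ := exists_lt_of_ode ha hμ0 hdq hdu hode hpos hq0' hb
  filter_upwards [eventually_ge_atTop s₀] with s hs
  exact (hanti hs₀ (hs₀.trans hs) hs).trans_lt hlt

theorem stmt_3 (a μ A : ℝ) (ha : 0 < a) (hμ : 1 / 3 < μ) (hA : 0 < A)
    (q : ℝ → ℝ) (hq : ContDiff ℝ 2 q)
    (hode : ∀ s : ℝ, deriv (deriv q) s * q s + a * s * deriv q s * q s
      + μ * q s + (1 / 3) * s * deriv q s = 0)
    (hq0 : q 0 = A) (hq0' : deriv q 0 = 0)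
    (hpos : ∀ s : ℝ, 0 < q s) :
    Tendsto q atTop (nhds 0) :=
  stmt_3_general a μ ha hμ q hq hode hq0' hpos
end

section
/- The limit of q'(s) as s → ∞ is 0. -/
open MeasureTheory Filter Real

/-!
Writing the equation as `q'' = -p q' - μ` with `p s = a s + s / (3 q s) ≥ 0` for `s ≥ 0`, the
integrating factor `exp (∫₀ˢ p)` shows that `q' ≤ 0` on `[0, ∞)`, so the positive function `q`
converges. The energy `q'² / 2 + μ q` has derivative `-p q'² ≤ 0` there, so it converges too;
hence `q'²` converges, and so does `q' = -|q'|`. A derivative with a limit, of a function with a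
limit, must tend to `0`.
-/

theorem nonpos_of_hasDerivAt_le_neg_mul {p y y' : ℝ → ℝ} {t₀ : ℝ} (hp : Continuous p)
    (hy : ∀ s, HasDerivAt y (y' s) s) (hy' : ∀ s, y' s ≤ -(p s * y s)) (hy₀ : y t₀ ≤ 0)
    {s : ℝ} (hs : t₀ ≤ s) : y s ≤ 0 := by
  set P : ℝ → ℝ := fun u => ∫ t in t₀..u, p t
  have hP : ∀ u, HasDerivAt P (p u) u := fun u =>
    (hp.integral_hasStrictDerivAt t₀ u).hasDerivAt
  have hanti : Antitone fun u => y u * exp (P u) := by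
    refine antitone_of_hasDerivAt_nonpos (fun u => (hy u).mul (hP u).exp) fun u => ?_
    have := mul_nonpos_of_nonpos_of_nonneg (by linarith [hy' u] : y' u + p u * y u ≤ 0)
      (exp_pos (P u)).le
    simp only [Pi.zero_apply]
    linarith
  have hys : y s * exp (P s) ≤ 0 :=
    (hanti hs).trans (mul_nonpos_of_nonpos_of_nonneg hy₀ (exp_pos _).le)
  exact nonpos_of_mul_nonpos_left hys (exp_pos _)

theorem exists_tendsto_of_hasDerivAt_nonpos {f f' : ℝ → ℝ} {t₀ m : ℝ}
    (hf : ∀ s, HasDerivAt f (f' s) s) (hf' : ∀ s, t₀ < s → f' s ≤ 0) (hm : ∀ s, m ≤ f s) :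
    ∃ L, Tendsto f atTop (nhds L) := by
  have hanti : AntitoneOn f (Set.Ici t₀) := by
    refine antitoneOn_of_hasDerivWithinAt_nonpos (convex_Ici t₀)
      (fun s _ => (hf s).continuousAt.continuousWithinAt) (fun s _ => (hf s).hasDerivWithinAt) ?_
    rw [interior_Ici]
    exact hf'
  have hmax : Antitone fun s => f (max s t₀) := fun s u hsu =>
    hanti (le_max_right s t₀) (le_max_right u t₀) (max_le_max_right t₀ hsu)
  refine ⟨_, (tendsto_atTop_ciInf hmax ⟨m, ?_⟩).congr' ?_⟩
  · rintro _ ⟨s, rfl⟩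
    exact hm _
  · filter_upwards [eventually_ge_atTop t₀] with s hs
    rw [max_eq_left hs]

theorem eq_zero_of_tendsto_of_tendsto_deriv {f f' : ℝ → ℝ} {L l : ℝ}
    (hf : ∀ s, HasDerivAt f (f' s) s) (hfL : Tendsto f atTop (nhds L))
    (hf'l : Tendsto f' atTop (nhds l)) : l = 0 := by
  have hmvt : ∀ s : ℝ, ∃ ξ ∈ Set.Ioo s (s + 1), f' ξ = (f (s + 1) - f s) / (s + 1 - s) :=
    fun s => exists_hasDerivAt_eq_slope f f' (lt_add_one s)
      (fun u _ => (hf u).continuousAt.continuousWithinAt) fun u _ => hf u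
  choose ξ hξ hξf' using hmvt
  have hξ_top : Tendsto ξ atTop atTop :=
    tendsto_atTop_mono (fun s => (hξ s).1.le) tendsto_id
  have hincr : Tendsto (fun s => f (s + 1) - f s) atTop (nhds (L - L)) :=
    (hfL.comp (tendsto_atTop_add_const_right _ 1 tendsto_id)).sub hfL
  rw [sub_self] at hincr
  refine tendsto_nhds_unique (hf'l.comp hξ_top) (hincr.congr fun s => ?_)
  simp [hξf']

theorem tendsto_neg_sqrt_of_tendsto_sq {α : Type*} {l : Filter α} {f : α → ℝ} {c : ℝ}
    (hf : ∀ᶠ x in l, f x ≤ 0) (hsq : Tendsto (fun x => f x ^ 2) l (nhds c)) :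
    Tendsto f l (nhds (-√c)) := by
  refine ((continuous_sqrt.tendsto c).comp hsq).neg.congr' ?_
  filter_upwards [hf] with x hx
  simp [sqrt_sq_eq_abs, abs_of_nonpos hx]

theorem hasDerivAt_energy {q q' q'' : ℝ → ℝ} {s : ℝ} (μ : ℝ) (hq : HasDerivAt q (q' s) s)
    (hq' : HasDerivAt q' (q'' s) s) :
    HasDerivAt (fun u => q' u ^ 2 / 2 + μ * q u) (q' s * (q'' s + μ)) s := by
  refine (((hq'.pow 2).div_const 2).add (hq.const_mul μ)).congr_deriv ?_
  push_cast
  ring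

theorem deriv_deriv_eq_of_ode {a μ : ℝ} {q : ℝ → ℝ}
    (hode : ∀ s : ℝ, deriv (deriv q) s * q s + a * s * deriv q s * q s
      + μ * q s + (1 / 3) * s * deriv q s = 0)
    (hpos : ∀ s : ℝ, 0 < q s) (s : ℝ) :
    deriv (deriv q) s = -((a * s + s / (3 * q s)) * deriv q s) - μ := by
  have := (hpos s).ne'
  field_simp
  linear_combination 3 * hode s

theorem stmt_4_general (a μ : ℝ) (ha : 0 < a) (hμ : 1 / 3 < μ)
    (q : ℝ → ℝ) (hq : ContDiff ℝ 2 q)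
    (hode : ∀ s : ℝ, deriv (deriv q) s * q s + a * s * deriv q s * q s
      + μ * q s + (1 / 3) * s * deriv q s = 0)
    (hq0' : deriv q 0 = 0)
    (hpos : ∀ s : ℝ, 0 < q s) :
    Tendsto (deriv q) atTop (nhds 0) := by
  have hμ₀ : 0 ≤ μ := by linarith
  have hdq : ∀ s, HasDerivAt q (deriv q s) s :=
    fun s => (hq.differentiable (by norm_num) s).hasDerivAt
  have hdq' : ∀ s, HasDerivAt (deriv q) (deriv (deriv q) s) s :=
    fun s => (hq.differentiable_deriv_two s).hasDerivAt
  set p : ℝ → ℝ := fun s => a * s + s / (3 * q s)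
  have hq'' : ∀ s, deriv (deriv q) s = -(p s * deriv q s) - μ := deriv_deriv_eq_of_ode hode hpos
  have hp : Continuous p := by
    have := hq.continuous
    have := fun s => (hpos s).ne'
    fun_prop (disch := simp_all)
  have hp₀ : ∀ s, 0 ≤ s → 0 ≤ p s := fun s hs => by have := hpos s; positivity
  have hq'_nonpos : ∀ s, 0 ≤ s → deriv q s ≤ 0 := fun s =>
    nonpos_of_hasDerivAt_le_neg_mul hp hdq' (fun s => by linarith [hq'' s]) hq0'.le
  obtain ⟨L, hqL⟩ := exists_tendsto_of_hasDerivAt_nonpos hdq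
    (fun s hs => hq'_nonpos s hs.le) fun s => (hpos s).le
  obtain ⟨M, hEM⟩ := exists_tendsto_of_hasDerivAt_nonpos (m := 0)
    (fun s => hasDerivAt_energy μ (hdq s) (hdq' s))
    (fun s hs => by
      rw [hq'' s]; nlinarith [mul_nonneg (hp₀ s hs.le) (sq_nonneg (deriv q s))])
    fun s => by have := hpos s; positivity
  have hsq : Tendsto (fun s => deriv q s ^ 2) atTop (nhds (2 * (M - μ * L))) :=
    ((hEM.sub (hqL.const_mul μ)).const_mul 2).congr fun s => by ring
  have hq'lim := tendsto_neg_sqrt_of_tendsto_sq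
    (eventually_atTop.mpr ⟨0, hq'_nonpos⟩) hsq
  rwa [eq_zero_of_tendsto_of_tendsto_deriv hdq hqL hq'lim] at hq'lim

theorem stmt_4 (a μ A : ℝ) (ha : 0 < a) (hμ : 1 / 3 < μ) (hA : 0 < A)
    (q : ℝ → ℝ) (hq : ContDiff ℝ 2 q)
    (hode : ∀ s : ℝ, deriv (deriv q) s * q s + a * s * deriv q s * q s
      + μ * q s + (1 / 3) * s * deriv q s = 0)
    (hq0 : q 0 = A) (hq0' : deriv q 0 = 0)
    (hpos : ∀ s : ℝ, 0 < q s) :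
    Tendsto (deriv q) atTop (nhds 0) :=
  stmt_4_general a μ ha hμ q hq hode hq0' hpos
end

section
/- The function s ↦ q'(s)² is integrable over ℝ, i.e. ∫_{-∞}^{∞} q'(s)² ds < ∞. -/
open MeasureTheory Filter Real Set

/-!
The energy `E = q'² / 2 + μ q` is nonnegative, and the equation says exactly that
`E' = -s · q'² (a + 1 / (3q))`. Since `s ≥ 1` on `[1, T]`,
`∫₁ᵀ q'² (a + 1 / (3q)) ≤ ∫₁ᵀ s q'² (a + 1 / (3q)) = E 1 - E T ≤ E 1`; the half line `s ≤ -1` is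
the mirror image, and finally `a q'² ≤ q'² (a + 1 / (3q))`.
-/

section DissipatedEnergy

variable {H w : ℝ → ℝ} {C : ℝ}

theorem integrableOn_Ioi_one_of_hasDerivAt_neg_mul (hw : Continuous w) (hw0 : ∀ s, 0 ≤ w s)
    (hH : ∀ s, HasDerivAt H (-(s * w s)) s) (hC : ∀ s, C ≤ H s) :
    IntegrableOn w (Ioi 1) := by
  have hsw : Continuous fun x => x * w x := continuous_id.mul hw
  refine integrableOn_Ioi_of_intervalIntegral_norm_bounded (H 1 - C) 1
    (fun _ => hw.integrableOn_Ioc) tendsto_id ?_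
  filter_upwards [eventually_ge_atTop 1] with T hT
  calc ∫ x in (1 : ℝ)..T, ‖w x‖ ≤ ∫ x in (1 : ℝ)..T, x * w x := by
        refine intervalIntegral.integral_mono_on hT (hw.norm.intervalIntegrable _ _)
          (hsw.intervalIntegrable _ _) fun x hx => ?_
        rw [norm_of_nonneg (hw0 x)]
        exact le_mul_of_one_le_left (hw0 x) hx.1
    _ = H 1 - H T := by
        rw [intervalIntegral.integral_eq_sub_of_hasDerivAt
          (fun x _ => by simpa using (hH x).neg) (hsw.intervalIntegrable _ _), Pi.neg_apply,
          Pi.neg_apply]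
        ring
    _ ≤ H 1 - C := by linarith [hC T]

theorem integrable_of_hasDerivAt_neg_mul (hw : Continuous w) (hw0 : ∀ s, 0 ≤ w s)
    (hH : ∀ s, HasDerivAt H (-(s * w s)) s) (hC : ∀ s, C ≤ H s) :
    Integrable w := by
  have hright := integrableOn_Ioi_one_of_hasDerivAt_neg_mul hw hw0 hH hC
  have hleft : IntegrableOn w (Iio (-1)) := by
    have hreflected : IntegrableOn (fun s => w (-s)) (Ioi 1) :=
      integrableOn_Ioi_one_of_hasDerivAt_neg_mul (H := fun s => H (-s))
        (hw.comp continuous_neg) (fun s => hw0 (-s))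
        (fun s => by simpa [Function.comp_def] using (hH (-s)).scomp s (hasDerivAt_neg' s))
        (fun s => hC (-s))
    rw [← (Measure.measurePreserving_neg volume).integrableOn_comp_preimage
      (Homeomorph.neg ℝ).measurableEmbedding]
    simpa [Function.comp_def] using hreflected
  rw [← integrableOn_univ, ← Iic_union_Ioi (a := (1 : ℝ)),
    ← Iio_union_Icc_eq_Iic (by norm_num : (-1 : ℝ) ≤ 1)]
  exact (hleft.union hw.integrableOn_Icc).union hright

end DissipatedEnergy

theorem hasDerivAt_energy_s5 {a μ : ℝ} {q : ℝ → ℝ} (hq : ContDiff ℝ 2 q) {s : ℝ}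
    (hode : deriv (deriv q) s * q s + a * s * deriv q s * q s + μ * q s
      + (1 / 3) * s * deriv q s = 0) (hqs : q s ≠ 0) :
    HasDerivAt (fun s => deriv q s ^ 2 / 2 + μ * q s)
      (-(s * (deriv q s ^ 2 * (a + (3 * q s)⁻¹)))) s := by
  have hq' : HasDerivAt q (deriv q s) s :=
    (hq.differentiable two_ne_zero s).hasDerivAt
  have hq'' : HasDerivAt (deriv q) (deriv (deriv q) s) s :=
    (hq.differentiable_deriv_two s).hasDerivAt
  refine (((hq''.pow 2).div_const 2).add (hq'.const_mul μ)).congr_deriv ?_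
  simp only [Nat.cast_ofNat, Nat.add_one_sub_one, pow_one]
  field_simp
  linear_combination (3 * deriv q s) * hode

theorem stmt_5_general (a μ : ℝ) (ha : 0 < a) (hμ : 1 / 3 < μ)
    (q : ℝ → ℝ) (hq : ContDiff ℝ 2 q)
    (hode : ∀ s : ℝ, deriv (deriv q) s * q s + a * s * deriv q s * q s
      + μ * q s + (1 / 3) * s * deriv q s = 0)
    (hpos : ∀ s : ℝ, 0 < q s) :
    Integrable (fun s : ℝ => deriv q s ^ 2) := by
  have hq' : Continuous (deriv q) := hq.continuous_deriv one_le_two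
  have hdissipation : Integrable fun s => deriv q s ^ 2 * (a + (3 * q s)⁻¹) := by
    refine integrable_of_hasDerivAt_neg_mul (C := 0) ?_ (fun s => ?_)
      (fun s => hasDerivAt_energy_s5 hq (hode s) (hpos s).ne') (fun s => ?_)
    · exact (hq'.pow 2).mul (continuous_const.add
        ((hq.continuous.const_mul 3).inv₀ fun s => (mul_pos three_pos (hpos s)).ne'))
    · have := hpos s
      positivity
    · have := hpos s
      have : 0 < μ := by linarith
      positivity
  refine (hdissipation.div_const a).mono' (hq'.pow 2).aestronglyMeasurable
    (Eventually.of_forall fun s => ?_)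
  have := hpos s
  rw [norm_of_nonneg (sq_nonneg _), le_div_iff₀ ha]
  exact mul_le_mul_of_nonneg_left (le_add_of_nonneg_right (by positivity)) (sq_nonneg _)

theorem stmt_5 (a μ A : ℝ) (ha : 0 < a) (hμ : 1 / 3 < μ) (hA : 0 < A)
    (q : ℝ → ℝ) (hq : ContDiff ℝ 2 q)
    (hode : ∀ s : ℝ, deriv (deriv q) s * q s + a * s * deriv q s * q s
      + μ * q s + (1 / 3) * s * deriv q s = 0)
    (hq0 : q 0 = A) (hq0' : deriv q 0 = 0)
    (hpos : ∀ s : ℝ, 0 < q s) :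
    Integrable (fun s : ℝ => deriv q s ^ 2) :=
  stmt_5_general a μ ha hμ q hq hode hpos
end

section
/- The function q is integrable over ℝ, i.e. ∫_{-∞}^{∞} q(s) ds < ∞. -/
open MeasureTheory Filter Real Set Topology Asymptotics

/-!
Write the equation as `q'' q = s (-q') (a q + 1/3) - μ q`. On `s ≥ 0` the solution is nonincreasing,
because `q'' = -μ < 0` wherever `q'` vanishes. It tends to `0`: if `q ≥ ε > 0`, the equation forces
`q'' ≤ -μ/2` as long as `s (-q') ≤ m` for a suitable `m > 0`, so eventually `q' ≤ -m/s` and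
`q + m log s` is nonincreasing, which drives `q` below `0`. Once `q` is small, the same identity gives
`s q' + k q ≤ 0` eventually for any `0 < k < 3μ`; then `q s ^ k` is nonincreasing, and `k > 1` is
available because `μ > 1/3`, so `q = O(s ^ (-k))` is integrable at `+∞`. The equation is invariant
under `s ↦ -s`, which handles `s ≤ 0`.
-/

theorem antitoneOn_Ici_of_hasDerivAt_nonpos {f f' : ℝ → ℝ} {s₀ : ℝ}
    (hf : ∀ s ≥ s₀, HasDerivAt f (f' s) s) (hf' : ∀ s > s₀, f' s ≤ 0) :
    AntitoneOn f (Ici s₀) :=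
  antitoneOn_of_hasDerivWithinAt_nonpos (convex_Ici s₀)
    (fun s hs => (hf s hs).continuousAt.continuousWithinAt)
    (fun s hs => (hf s (le_of_lt (by simpa using hs))).hasDerivWithinAt)
    (fun s hs => hf' s (by simpa using hs))

theorem nonpos_of_hasDerivAt_of_deriv_neg {f f' : ℝ → ℝ} {s₀ : ℝ}
    (hf : ∀ s ≥ s₀, HasDerivAt f (f' s) s) (h₀ : f s₀ ≤ 0)
    (hf' : ∀ s ≥ s₀, f s = 0 → f' s < 0) : ∀ s ≥ s₀, f s ≤ 0 := fun _ hs =>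
  image_le_of_deriv_right_lt_deriv_boundary' (B := 0) (B' := 0)
    (fun x hx => (hf x hx.1).continuousAt.continuousWithinAt)
    (fun x hx => (hf x hx.1).hasDerivWithinAt) h₀ continuousOn_const
    (fun _ _ => hasDerivWithinAt_const _ _ _) (fun x hx => hf' x hx.1) ⟨hs, le_rfl⟩

theorem eventually_nonpos_of_deriv_le_neg {f f' : ℝ → ℝ} {δ : ℝ} (hδ : 0 < δ)
    (hf : ∀ᶠ s in atTop, HasDerivAt f (f' s) s)
    (hf' : ∀ᶠ s in atTop, 0 ≤ f s → f' s ≤ -δ) : ∀ᶠ s in atTop, f s ≤ 0 := by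
  obtain ⟨s₀, hs₀⟩ := eventually_atTop.1 (hf.and hf')
  obtain ⟨s₁, hs₀₁, hf₁⟩ : ∃ s₁ ≥ s₀, f s₁ ≤ 0 := by
    by_contra! hpos
    have hanti : AntitoneOn (fun s => f s + δ * s) (Ici s₀) :=
      antitoneOn_Ici_of_hasDerivAt_nonpos
        (fun s hs => (hs₀ s hs).1.add ((hasDerivAt_id s).const_mul δ)) fun s hs => by
          linarith [(hs₀ s hs.le).2 (hpos s hs.le).le]
    have hs₁ : s₀ ≤ s₀ + f s₀ / δ := by
      linarith [div_pos (hpos s₀ le_rfl) hδ]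
    have := hanti self_mem_Ici hs₁ hs₁
    dsimp only at this
    rw [mul_add, mul_div_cancel₀ _ hδ.ne'] at this
    linarith [hpos _ hs₁]
  refine eventually_atTop.2 ⟨s₁, nonpos_of_hasDerivAt_of_deriv_neg
    (fun s hs => (hs₀ s (hs₀₁.trans hs)).1) hf₁ fun s hs hfs => ?_⟩
  linarith [(hs₀ s (hs₀₁.trans hs)).2 hfs.ge]

theorem tendsto_atBot_of_deriv_le_neg_inv {f f' : ℝ → ℝ} {m : ℝ} (hm : 0 < m)
    (hf : ∀ᶠ s in atTop, HasDerivAt f (f' s) s) (hf' : ∀ᶠ s in atTop, f' s ≤ -(m * s⁻¹)) :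
    Tendsto f atTop atBot := by
  obtain ⟨s₀, hs₀⟩ := eventually_atTop.1 (hf.and (hf'.and (eventually_gt_atTop 0)))
  have hanti : AntitoneOn (fun s => f s + m * log s) (Ici s₀) :=
    antitoneOn_Ici_of_hasDerivAt_nonpos
      (fun s hs => (hs₀ s hs).1.add ((hasDerivAt_log (hs₀ s hs).2.2.ne').const_mul m))
      fun s hs => by linarith [(hs₀ s hs.le).2.1]
  refine tendsto_atBot_mono' atTop (f₁ := fun s => f s₀ + m * log s₀ - m * log s)
    (eventually_atTop.2 ⟨s₀, fun s hs => ?_⟩) (tendsto_atBot_add_const_left atTop _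
      (tendsto_neg_atTop_atBot.comp (tendsto_log_atTop.const_mul_atTop hm)))
  have := hanti self_mem_Ici hs hs
  dsimp only at this ⊢
  linarith

theorem isBigO_rpow_neg_of_mul_deriv_add_nonpos {f f' : ℝ → ℝ} {k : ℝ}
    (hf : ∀ᶠ s in atTop, HasDerivAt f (f' s) s) (hf₀ : ∀ᶠ s in atTop, 0 ≤ f s)
    (hk : ∀ᶠ s in atTop, s * f' s + k * f s ≤ 0) : f =O[atTop] fun s => s ^ (-k) := by
  obtain ⟨s₀, hs₀⟩ := eventually_atTop.1 (hf.and (hf₀.and (hk.and (eventually_gt_atTop 0))))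
  have hanti : AntitoneOn (fun s => f s * s ^ k) (Ici s₀) := by
    refine antitoneOn_Ici_of_hasDerivAt_nonpos
      (fun s hs => (hs₀ s hs).1.mul (hasDerivAt_rpow_const (Or.inl (hs₀ s hs).2.2.2.ne')))
      fun s hs => ?_
    obtain ⟨-, -, hks, hs0⟩ := hs₀ s hs.le
    have hsk : s ^ k = s ^ (k - 1) * s := by
      rw [rpow_sub_one hs0.ne', div_mul_cancel₀ _ hs0.ne']
    calc f' s * s ^ k + f s * (k * s ^ (k - 1)) = s ^ (k - 1) * (s * f' s + k * f s) := by
          rw [hsk]; ring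
      _ ≤ 0 := mul_nonpos_of_nonneg_of_nonpos (rpow_nonneg hs0.le _) hks
  refine IsBigO.of_bound (f s₀ * s₀ ^ k) ?_
  filter_upwards [eventually_ge_atTop s₀] with s hs
  obtain ⟨-, hfs, -, hs0⟩ := hs₀ s hs
  rw [norm_of_nonneg hfs, norm_of_nonneg (rpow_nonneg hs0.le _), rpow_neg hs0.le,
    ← div_eq_mul_inv, le_div_iff₀ (rpow_pos_of_pos hs0 _)]
  exact hanti self_mem_Ici hs hs

structure PositiveSolution (a μ : ℝ) (q q' q'' : ℝ → ℝ) : Prop where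
  hasDerivAt : ∀ s, HasDerivAt q (q' s) s
  hasDerivAt_deriv : ∀ s, HasDerivAt q' (q'' s) s
  ode : ∀ s, q'' s * q s + a * s * q' s * q s + μ * q s + 1 / 3 * s * q' s = 0
  pos : ∀ s, 0 < q s

namespace PositiveSolution

variable {a μ : ℝ} {q q' q'' : ℝ → ℝ}

theorem second_deriv_mul_eq (h : PositiveSolution a μ q q' q'') (s : ℝ) :
    q'' s * q s = s * -q' s * (a * q s + 1 / 3) - μ * q s := by
  linear_combination h.ode s

theorem comp_neg (h : PositiveSolution a μ q q' q'') :
    PositiveSolution a μ (fun s => q (-s)) (fun s => -q' (-s)) (fun s => q'' (-s)) where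
  hasDerivAt s := by
    simpa [Function.comp_def] using (h.hasDerivAt (-s)).comp s (hasDerivAt_neg s)
  hasDerivAt_deriv s := by
    simpa [Function.comp_def] using ((h.hasDerivAt_deriv (-s)).comp s (hasDerivAt_neg s)).fun_neg
  ode s := by linear_combination h.ode (-s)
  pos s := h.pos (-s)

theorem deriv_nonpos (h : PositiveSolution a μ q q' q'') (hμ : 0 < μ) (h₀ : q' 0 = 0) :
    ∀ s ≥ 0, q' s ≤ 0 :=
  nonpos_of_hasDerivAt_of_deriv_neg (fun s _ => h.hasDerivAt_deriv s) h₀.le fun s _ hs => by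
    have := h.second_deriv_mul_eq s
    rw [hs] at this
    nlinarith [h.pos s]

theorem antitoneOn (h : PositiveSolution a μ q q' q'') (hμ : 0 < μ) (h₀ : q' 0 = 0) :
    AntitoneOn q (Ici 0) :=
  antitoneOn_Ici_of_hasDerivAt_nonpos (fun s _ => h.hasDerivAt s) fun s hs =>
    h.deriv_nonpos hμ h₀ s hs.le

theorem exists_eventually_deriv_le_neg_inv (h : PositiveSolution a μ q q' q'') (ha : 0 < a)
    (hμ : 0 < μ) {ε : ℝ} (hε : 0 < ε) (hle : ∀ᶠ s in atTop, ε ≤ q s) :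
    ∃ m > 0, ∀ᶠ s in atTop, q' s ≤ -(m * s⁻¹) := by
  set m := μ / (2 * (a + 1 / (3 * ε))) with hm_def
  have hm : 0 < m := by positivity
  have hm' : m * (a + 1 / (3 * ε)) = μ / 2 := by rw [hm_def]; field_simp
  refine ⟨m, hm, ?_⟩
  have hf : ∀ᶠ s in atTop, m * s⁻¹ + q' s ≤ 0 := by
    refine eventually_nonpos_of_deriv_le_neg (half_pos hμ)
      (f' := fun s => m * -(s ^ 2)⁻¹ + q'' s) ?_ ?_
    · filter_upwards [eventually_gt_atTop 0] with s hs
      exact ((hasDerivAt_inv hs.ne').const_mul m).add (h.hasDerivAt_deriv s)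
    filter_upwards [hle, eventually_gt_atTop 0] with s hεq hs hf
    have hsq : s * -q' s ≤ m := calc
      s * -q' s ≤ s * (m * s⁻¹) := by gcongr; linarith
      _ = m := by field_simp
    have hq'' : q'' s * q s ≤ -(μ / 2) * q s := calc
      q'' s * q s = s * -q' s * (a * q s + 1 / 3) - μ * q s := h.second_deriv_mul_eq s
      _ ≤ m * (a * q s + q s / (3 * ε)) - μ * q s := by
          have hqε : 1 / 3 ≤ q s / (3 * ε) := by rw [le_div_iff₀ (by positivity)]; linarith
          have := h.pos s
          gcongr
      _ = -(μ / 2) * q s := by linear_combination q s * hm'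
    have := le_of_mul_le_mul_right hq'' (h.pos s)
    have : 0 ≤ m * (s ^ 2)⁻¹ := by positivity
    linarith
  exact hf.mono fun s hs => by linarith

theorem tendsto_atTop_zero (h : PositiveSolution a μ q q' q'') (ha : 0 < a) (hμ : 0 < μ)
    (h₀ : q' 0 = 0) : Tendsto q atTop (𝓝 0) := by
  refine tendsto_order.2 ⟨fun b hb => Eventually.of_forall fun s => hb.trans (h.pos s),
    fun ε hε => ?_⟩
  by_contra hne
  have hle : ∀ᶠ s in atTop, ε ≤ q s := by
    filter_upwards [eventually_ge_atTop 0] with s hs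
    obtain ⟨t, ht, hst⟩ := ((not_eventually.1 hne).and_eventually (eventually_ge_atTop s)).exists
    exact (not_lt.1 ht).trans (h.antitoneOn hμ h₀ hs (hs.trans hst) hst)
  obtain ⟨m, hm, hq'⟩ := h.exists_eventually_deriv_le_neg_inv ha hμ hε hle
  obtain ⟨s, hs⟩ := ((tendsto_atBot_of_deriv_le_neg_inv hm
    (Eventually.of_forall h.hasDerivAt) hq').eventually_lt_atBot 0).exists
  exact (h.pos s).not_gt hs

theorem eventually_mul_deriv_add_nonpos (h : PositiveSolution a μ q q' q'') (ha : 0 < a)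
    (h₀ : q' 0 = 0) {k : ℝ} (hk : 0 < k) (hkμ : k < 3 * μ) :
    ∀ᶠ s in atTop, s * q' s + k * q s ≤ 0 := by
  have hμ : 0 < μ := by linarith
  set δ := (μ - k / 3) / 2 with hδ_def
  have hδ : 0 < δ := by rw [hδ_def]; linarith
  set ε := δ / (a * k) with hε_def
  have hε : 0 < ε := by positivity
  have hakε : a * k * ε = δ := by rw [hε_def]; field_simp
  refine eventually_nonpos_of_deriv_le_neg hδ
    (f' := fun s => 1 * q' s + s * q'' s + k * q' s)
    (Eventually.of_forall fun s =>
      ((hasDerivAt_id s).mul (h.hasDerivAt_deriv s)).add ((h.hasDerivAt s).const_mul k)) ?_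
  filter_upwards [(h.tendsto_atTop_zero ha hμ h₀).eventually_lt_const hε,
    eventually_ge_atTop 1] with s hqε hs hf
  have hq's : q' s ≤ 0 := h.deriv_nonpos hμ h₀ s (by linarith)
  have hqs := h.pos s
  have hq'' : q'' s * q s ≤ -δ * q s := calc
    q'' s * q s = s * -q' s * (a * q s + 1 / 3) - μ * q s := h.second_deriv_mul_eq s
    _ ≤ k * q s * (a * q s + 1 / 3) - μ * q s := by gcongr ?_ * _ - _; linarith
    _ = (a * k * q s + k / 3 - μ) * q s := by ring
    _ ≤ (a * k * ε + k / 3 - μ) * q s := by gcongr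
    _ = -δ * q s := by rw [hakε, hδ_def]; ring
  have := mul_le_mul_of_nonneg_left (le_of_mul_le_mul_right hq'' hqs) (by linarith : (0:ℝ) ≤ s)
  nlinarith

theorem integrableOn_Ici (h : PositiveSolution a μ q q' q'') (ha : 0 < a) (hμ : 1 / 3 < μ)
    (h₀ : q' 0 = 0) : IntegrableOn q (Ici 0) := by
  have hcont : Continuous q := continuous_iff_continuousAt.2 fun s => (h.hasDerivAt s).continuousAt
  refine (hcont.continuousOn.locallyIntegrableOn measurableSet_Ici).integrableOn_of_isBigO_atTop
    (isBigO_rpow_neg_of_mul_deriv_add_nonpos (Eventually.of_forall h.hasDerivAt)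
      (Eventually.of_forall fun s => (h.pos s).le)
      (h.eventually_mul_deriv_add_nonpos ha h₀ (k := (1 + 3 * μ) / 2) (by linarith)
        (by linarith)))
    (integrableAtFilter_rpow_atTop_iff.2 (by linarith))

end PositiveSolution

theorem stmt_6_general (a μ : ℝ) (ha : 0 < a) (hμ : 1 / 3 < μ)
    (q : ℝ → ℝ) (hq : ContDiff ℝ 2 q)
    (hode : ∀ s : ℝ, deriv (deriv q) s * q s + a * s * deriv q s * q s
      + μ * q s + (1 / 3) * s * deriv q s = 0)
    (hq0' : deriv q 0 = 0)
    (hpos : ∀ s : ℝ, 0 < q s) :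
    Integrable q := by
  have h : PositiveSolution a μ q (deriv q) (deriv (deriv q)) :=
    { hasDerivAt := fun s => (hq.differentiable two_ne_zero s).hasDerivAt
      hasDerivAt_deriv := fun s => (hq.deriv'.differentiable one_ne_zero s).hasDerivAt
      ode := hode
      pos := hpos }
  have hleft : IntegrableOn q (Iic 0) := by
    have := h.comp_neg.integrableOn_Ici ha hμ (by simp [hq0'])
    rw [← neg_zero] at this
    simpa only [neg_neg] using this.comp_neg_Iic
  rw [← integrableOn_univ, ← Iic_union_Ici (a := (0 : ℝ))]
  exact hleft.union (h.integrableOn_Ici ha hμ hq0')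

theorem stmt_6 (a μ A : ℝ) (ha : 0 < a) (hμ : 1 / 3 < μ) (hA : 0 < A)
    (q : ℝ → ℝ) (hq : ContDiff ℝ 2 q)
    (hode : ∀ s : ℝ, deriv (deriv q) s * q s + a * s * deriv q s * q s
      + μ * q s + (1 / 3) * s * deriv q s = 0)
    (hq0 : q 0 = A) (hq0' : deriv q 0 = 0)
    (hpos : ∀ s : ℝ, 0 < q s) :
    Integrable q :=
  stmt_6_general a μ ha hμ q hq hode hq0' hpos
end

section
/- The following identity holds: (μ - 1/3)·∫_{-∞}^{∞} q(s) ds = ∫_{-∞}^{∞} q'(s)² ds + (a/2)·∫_{-∞}^{∞} q(s)² ds. -/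
open MeasureTheory Filter Real Set Topology

/-! By the ODE, `F s = q' s * q s + s * (a / 2 * q s ^ 2 + q s / 3)` satisfies
`F' = q' ^ 2 + a / 2 * q ^ 2 - (μ - 1 / 3) * q`, so the identity says `∫ F' = 0`.
Since `F'` is integrable, `F` has limits at `±∞`. These limits vanish because `F s / s` is
integrable away from the origin (it is dominated by `|q' q| + |a / 2 * q ^ 2 + q / 3|`),
whereas `L / s` is not integrable at infinity unless `L = 0`. -/

theorem eq_zero_of_tendsto_mul_of_integrableOn_Ioi {f : ℝ → ℝ} {c L : ℝ}
    (hf : IntegrableOn f (Ioi c)) (hL : Tendsto (fun s => s * f s) atTop (𝓝 L)) : L = 0 := by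
  by_contra hL0
  have hL0 : 0 < |L| := abs_pos.mpr hL0
  obtain ⟨T, hT⟩ := eventually_atTop.mp
    ((hL.abs.eventually (lt_mem_nhds (half_lt_self hL0))).and (eventually_gt_atTop (max c 0)))
  apply not_integrableOn_Ioi_inv (a := T)
  have hfT : IntegrableOn f (Ioi T) :=
    hf.mono_set (Ioi_subset_Ioi ((le_max_left c 0).trans (hT T le_rfl).2.le))
  refine (hfT.norm.const_mul (2 / |L|)).mono' measurable_inv.aestronglyMeasurable ?_
  filter_upwards [ae_restrict_mem measurableSet_Ioi] with s hs
  obtain ⟨hsmall, hpos⟩ := hT s (le_of_lt hs)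
  have hs0 : 0 < s := (le_max_right c 0).trans_lt hpos
  rw [abs_mul, abs_of_pos hs0] at hsmall
  have key : 1 ≤ 2 / |L| * (s * |f s|) := calc
    (1 : ℝ) = 2 / |L| * (|L| / 2) := by field_simp
    _ ≤ 2 / |L| * (s * |f s|) := by gcongr
  rw [norm_inv, Real.norm_of_nonneg hs0.le, Real.norm_eq_abs, inv_le_iff_one_le_mul₀ hs0]
  linarith

theorem eq_zero_of_tendsto_mul_of_integrableOn_Iic {f : ℝ → ℝ} {c L : ℝ}
    (hf : IntegrableOn f (Iic c)) (hL : Tendsto (fun s => s * f s) atBot (𝓝 L)) : L = 0 := by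
  have hneg : IntegrableOn (fun s => -f (-s)) (Ioi (-c)) :=
    ((MeasurePreserving.integrableOn_comp_preimage (Measure.measurePreserving_neg _)
      (Homeomorph.neg ℝ).measurableEmbedding).2 hf.neg).mono_set (by simp)
  refine eq_zero_of_tendsto_mul_of_integrableOn_Ioi hneg ?_
  simpa [Function.comp_def] using hL.comp tendsto_neg_atTop_atBot

theorem integral_eq_zero_of_hasDerivAt_of_integrableOn_div {F F' : ℝ → ℝ} {a b : ℝ}
    (hderiv : ∀ x, HasDerivAt F (F' x) x) (hF' : Integrable F')
    (hbot : IntegrableOn (fun s => F s / s) (Iic a))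
    (htop : IntegrableOn (fun s => F s / s) (Ioi b)) :
    ∫ x, F' x = 0 := by
  have hmul {l : Filter ℝ} (hl : ∀ᶠ s in l, s ≠ 0) : F =ᶠ[l] fun s => s * (F s / s) :=
    hl.mono fun s hs => (mul_div_cancel₀ (F s) hs).symm
  have hlim_bot := tendsto_limUnder_of_hasDerivAt_of_integrableOn_Iic (a := 0)
    (fun x _ => hderiv x) hF'.integrableOn
  have hlim_top := tendsto_limUnder_of_hasDerivAt_of_integrableOn_Ioi (a := 0)
    (fun x _ => hderiv x) hF'.integrableOn
  rw [integral_of_hasDerivAt_of_tendsto hderiv hF' hlim_bot hlim_top,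
    eq_zero_of_tendsto_mul_of_integrableOn_Iic hbot
      (hlim_bot.congr' (hmul (eventually_ne_atBot 0))),
    eq_zero_of_tendsto_mul_of_integrableOn_Ioi htop
      (hlim_top.congr' (hmul (eventually_ne_atTop 0))), sub_zero]

noncomputable def flux (a : ℝ) (q : ℝ → ℝ) (s : ℝ) : ℝ :=
  deriv q s * q s + s * (a / 2 * q s ^ 2 + 1 / 3 * q s)

section
variable {a μ : ℝ} {q : ℝ → ℝ}

theorem hasDerivAt_flux (hq : ContDiff ℝ 2 q) {s : ℝ}
    (hode : deriv (deriv q) s * q s + a * s * deriv q s * q s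
      + μ * q s + (1 / 3) * s * deriv q s = 0) :
    HasDerivAt (flux a q) (deriv q s ^ 2 + a / 2 * q s ^ 2 - (μ - 1 / 3) * q s) s := by
  have hq' : HasDerivAt q (deriv q s) s := (hq.differentiable two_ne_zero s).hasDerivAt
  have hq'' : HasDerivAt (deriv q) (deriv (deriv q) s) s :=
    ((hq.iterate_deriv' 1 1).differentiable one_ne_zero s).hasDerivAt
  refine ((hq''.mul hq').add ((hasDerivAt_id' s).mul
    (((hq'.pow 2).const_mul (a / 2)).add (hq'.const_mul (1 / 3))))).congr_deriv ?_
  simp only [Pi.add_apply, Pi.pow_apply, Nat.cast_ofNat]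
  linear_combination hode

theorem continuous_flux (hq : ContDiff ℝ 1 q) : Continuous (flux a q) := by
  have := hq.continuous_deriv le_rfl
  have := hq.continuous
  unfold flux
  fun_prop

theorem integrableOn_flux_div (hq : ContDiff ℝ 1 q) (hint : Integrable q)
    (hint2 : Integrable (fun s => q s ^ 2)) (hintd : Integrable (fun s => deriv q s ^ 2))
    {S : Set ℝ} (hS : MeasurableSet S) (hS1 : ∀ s ∈ S, 1 ≤ |s|) :
    IntegrableOn (fun s => flux a q s / s) S := by
  have hu : Integrable (fun s => deriv q s * q s) :=
    ((memLp_two_iff_integrable_sq (hq.continuous_deriv le_rfl).aestronglyMeasurable).2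
      hintd).integrable_mul
      ((memLp_two_iff_integrable_sq hq.continuous.aestronglyMeasurable).2 hint2)
  have hw : Integrable (fun s => a / 2 * q s ^ 2 + 1 / 3 * q s) :=
    (hint2.const_mul _).add (hint.const_mul _)
  refine (hu.abs.add hw.abs).integrableOn.mono'
    ((continuous_flux hq).measurable.div measurable_id).aestronglyMeasurable ?_
  filter_upwards [ae_restrict_mem hS] with s hs
  have hs0 : s ≠ 0 := by
    rintro rfl
    linarith [hS1 0 hs, abs_zero (α := ℝ)]
  rw [Real.norm_eq_abs, flux, add_div, mul_div_cancel_left₀ _ hs0, Pi.add_apply]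
  calc _ ≤ |deriv q s * q s / s| + |a / 2 * q s ^ 2 + 1 / 3 * q s| := abs_add_le _ _
    _ ≤ _ := by
      rw [abs_div]
      gcongr
      exact div_le_self (abs_nonneg _) (hS1 s hs)

end

theorem stmt_8_general (a μ : ℝ)
    (q : ℝ → ℝ) (hq : ContDiff ℝ 2 q)
    (hode : ∀ s : ℝ, deriv (deriv q) s * q s + a * s * deriv q s * q s
      + μ * q s + (1 / 3) * s * deriv q s = 0)
    (hint : Integrable q)
    (hint2 : Integrable (fun s : ℝ => q s ^ 2))
    (hintd : Integrable (fun s : ℝ => deriv q s ^ 2)) :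
    (μ - 1 / 3) * ∫ s : ℝ, q s
      = (∫ s : ℝ, deriv q s ^ 2) + (a / 2) * ∫ s : ℝ, q s ^ 2 := by
  have hq1 : ContDiff ℝ 1 q := hq.of_le one_le_two
  have hint2' : Integrable (fun s => a / 2 * q s ^ 2) := hint2.const_mul _
  have hint' : Integrable (fun s => (μ - 1 / 3) * q s) := hint.const_mul _
  have hsum : Integrable (fun s => deriv q s ^ 2 + a / 2 * q s ^ 2) := hintd.add hint2'
  have hzero : ∫ s, (deriv q s ^ 2 + a / 2 * q s ^ 2 - (μ - 1 / 3) * q s) = 0 :=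
    integral_eq_zero_of_hasDerivAt_of_integrableOn_div (fun s => hasDerivAt_flux hq (hode s))
      (hsum.sub hint')
      (integrableOn_flux_div hq1 hint hint2 hintd (measurableSet_Iic (a := -1))
        fun s hs => le_abs.mpr (Or.inr (by linarith [mem_Iic.mp hs])))
      (integrableOn_flux_div hq1 hint hint2 hintd (measurableSet_Ioi (a := 1))
        fun s hs => le_abs.mpr (Or.inl (mem_Ioi.mp hs).le))
  rw [integral_sub hsum hint', integral_add hintd hint2', integral_const_mul,
    integral_const_mul] at hzero
  linarith

theorem stmt_8 (a μ A : ℝ) (ha : 0 < a) (hμ : 1 / 3 < μ) (hA : 0 < A)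
    (q : ℝ → ℝ) (hq : ContDiff ℝ 2 q)
    (hode : ∀ s : ℝ, deriv (deriv q) s * q s + a * s * deriv q s * q s
      + μ * q s + (1 / 3) * s * deriv q s = 0)
    (hq0 : q 0 = A) (hq0' : deriv q 0 = 0)
    (hpos : ∀ s : ℝ, 0 < q s)
    (hint : Integrable q)
    (hint2 : Integrable (fun s : ℝ => q s ^ 2))
    (hintd : Integrable (fun s : ℝ => deriv q s ^ 2)) :
    (μ - 1 / 3) * ∫ s : ℝ, q s
      = (∫ s : ℝ, deriv q s ^ 2) + (a / 2) * ∫ s : ℝ, q s ^ 2 :=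
  stmt_8_general a μ q hq hode hint hint2 hintd
end

section
/- The derivative q' is uniformly bounded by: |q'(s)| ≤ μ·√(3A/(1 + 3aA)) for all s ∈ ℝ. -/
/-!
On `[0, ∞)` we have `q' ≤ 0` and `q ≤ A`, and the equation reads
`(q'' + μ) q = -s q' (a q + 1/3) ≥ 0`, so `q'' ≥ -μ` and `-q'(s) ≤ μ s`. Since `-q'` vanishes at `0`
and at `∞`, if it exceeded the bound it would do so at an interior maximum `s`, where `q''(s) = 0`
and the equation becomes `p s (a q + 1/3) = μ q` with `p = -q'(s)`. Together with `p ≤ μ s` this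
gives `p² ≤ μ² q / (a q + 1/3) ≤ 3 μ² A / (1 + 3 a A)`. As `q'` is odd, `s < 0` follows.
-/

open Filter Real Set Topology

theorem le_of_tendsto_of_isLocalMax_le {g : ℝ → ℝ} {b L C : ℝ} (hg : Continuous g)
    (hb : g b ≤ C) (hlim : Tendsto g atTop (𝓝 L)) (hL : L ≤ C)
    (hmax : ∀ s, b < s → IsLocalMax g s → g s ≤ C) {s : ℝ} (hs : b ≤ s) : g s ≤ C := by
  by_contra! hCs
  obtain ⟨T, hgT, hsT⟩ : ∃ T, g T < g s ∧ s ≤ T :=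
    ((hlim.eventually (gt_mem_nhds (hL.trans_lt hCs))).and (eventually_ge_atTop s)).exists
  obtain ⟨s₀, hs₀, hmax₀⟩ := isCompact_Icc.exists_isMaxOn ⟨s, hs, hsT⟩ hg.continuousOn
  have hgs₀ : g s ≤ g s₀ := hmax₀ ⟨hs, hsT⟩
  have hb₀ : b < s₀ := hs₀.1.lt_of_ne (by rintro rfl; linarith)
  have hT₀ : s₀ < T := hs₀.2.lt_of_ne (by rintro rfl; linarith)
  linarith [hmax s₀ hb₀ (hmax₀.isLocalMax (Icc_mem_nhds hb₀ hT₀))]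

theorem deriv_neg_of_even {f : ℝ → ℝ} (hf : ∀ x, f (-x) = f x) (x : ℝ) :
    deriv f (-x) = -deriv f x := by
  have h := deriv_comp_neg (f := f) (x := x)
  rw [funext hf] at h
  linarith

theorem le_mul_sqrt_of_mul_eq_of_le {a μ A Q p s : ℝ} (ha : 0 ≤ a) (hμ : 0 ≤ μ) (hQ : 0 < Q)
    (hQA : Q ≤ A) (hs : 0 < s) (heq : p * s * (a * Q + 1 / 3) = μ * Q) (hp : p ≤ μ * s) :
    p ≤ μ * √(3 * A / (1 + 3 * a * A)) := by
  have hpQ : p ^ 2 * (a * Q + 1 / 3) ≤ μ ^ 2 * Q := by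
    refine le_of_mul_le_mul_left ?_ hs
    calc s * (p ^ 2 * (a * Q + 1 / 3)) = p * (μ * Q) := by linear_combination p * heq
      _ ≤ μ * s * (μ * Q) := mul_le_mul_of_nonneg_right hp (by positivity)
      _ = s * (μ ^ 2 * Q) := by ring
  have hpa : a * p ^ 2 ≤ μ ^ 2 := by
    refine le_of_mul_le_mul_right ?_ hQ
    nlinarith [sq_nonneg p]
  -- `Q ↦ Q / (a Q + 1/3)` is increasing, so `Q` may be replaced by `A`
  have hpA : p ^ 2 ≤ μ ^ 2 * (3 * A / (1 + 3 * a * A)) := by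
    have hA : 0 < A := hQ.trans_le hQA
    rw [← mul_div_assoc, le_div_iff₀ (by positivity)]
    nlinarith [mul_le_mul_of_nonneg_right hpa (sub_nonneg.2 hQA)]
  calc p ≤ |p| := le_abs_self p
    _ ≤ √(μ ^ 2 * (3 * A / (1 + 3 * a * A))) := abs_le_sqrt hpA
    _ = μ * √(3 * A / (1 + 3 * a * A)) := by rw [sqrt_mul (sq_nonneg μ), sqrt_sq hμ]

theorem neg_le_deriv_deriv_of_ode {a μ : ℝ} {q : ℝ → ℝ} (ha : 0 ≤ a)
    (hode : ∀ s : ℝ, deriv (deriv q) s * q s + a * s * deriv q s * q s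
      + μ * q s + (1 / 3) * s * deriv q s = 0)
    {s : ℝ} (hs : 0 ≤ s) (hqs : 0 < q s) (hq's : deriv q s ≤ 0) :
    -μ ≤ deriv (deriv q) s := by
  have h : (deriv (deriv q) s + μ) * q s = -(s * deriv q s) * (a * q s + 1 / 3) := by
    linear_combination hode s
  have : 0 ≤ (deriv (deriv q) s + μ) * q s := by
    rw [h]
    exact mul_nonneg (by nlinarith) (by positivity)
  nlinarith

theorem stmt_9_general (a μ A : ℝ) (ha : 0 < a) (hμ : 1 / 3 < μ)
    (q : ℝ → ℝ) (hq : ContDiff ℝ 2 q)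
    (hode : ∀ s : ℝ, deriv (deriv q) s * q s + a * s * deriv q s * q s
      + μ * q s + (1 / 3) * s * deriv q s = 0)
    (hq0 : q 0 = A) (hq0' : deriv q 0 = 0)
    (hpos : ∀ s : ℝ, 0 < q s)
    (heven : ∀ s : ℝ, q (-s) = q s)
    (hanti : StrictAntiOn q (Set.Ioi 0))
    (hlim' : Tendsto (deriv q) atTop (nhds 0)) :
    ∀ s : ℝ, |deriv q s| ≤ μ * Real.sqrt (3 * A / (1 + 3 * a * A)) := by
  have hμ0 : 0 ≤ μ := by linarith
  have hdq : Differentiable ℝ q := hq.differentiable (by norm_num)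
  have hdq' : Differentiable ℝ (deriv q) := hq.differentiable_deriv_two
  have hq'_nonpos : ∀ t, 0 ≤ t → deriv q t ≤ 0 := by
    intro t ht
    rcases ht.eq_or_lt with rfl | ht
    · exact hq0'.le
    · rw [← derivWithin_of_isOpen isOpen_Ioi ht]
      exact hanti.antitoneOn.derivWithin_nonpos
  have hq_le : ∀ t, 0 ≤ t → q t ≤ A := fun t ht => hq0 ▸
    antitoneOn_of_deriv_nonpos (convex_Ici 0) hdq.continuous.continuousOn hdq.differentiableOn
      (fun x hx => hq'_nonpos x (interior_Ici.subset hx).le) self_mem_Ici ht ht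
  have hq'_ge : ∀ t, 0 ≤ t → -deriv q t ≤ μ * t := by
    intro t ht
    have := (convex_Ici 0).mul_sub_le_image_sub_of_le_deriv hdq'.continuous.continuousOn
      hdq'.differentiableOn (C := -μ) (fun x hx => neg_le_deriv_deriv_of_ode ha.le hode
        (interior_Ici.subset hx).le (hpos x) (hq'_nonpos x (interior_Ici.subset hx).le))
      0 self_mem_Ici t ht ht
    linarith
  have hbound : ∀ t, 0 ≤ t → -deriv q t ≤ μ * √(3 * A / (1 + 3 * a * A)) := by
    refine fun t ht => le_of_tendsto_of_isLocalMax_le (g := fun t => -deriv q t)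
      hdq'.continuous.neg (by simp only [hq0', neg_zero]; positivity) (by simpa using hlim'.neg)
      (by positivity) (fun u hu hmax => ?_) ht
    have hcrit : deriv (deriv q) u = 0 := by simpa using hmax.deriv_eq_zero
    exact le_mul_sqrt_of_mul_eq_of_le ha.le hμ0 (hpos u) (hq_le u hu.le) hu
      (by linear_combination -hode u + q u * hcrit) (hq'_ge u hu.le)
  intro s
  rcases le_total 0 s with hs | hs
  · rw [abs_of_nonpos (hq'_nonpos s hs)]
    exact hbound s hs
  · rw [← neg_neg s, deriv_neg_of_even heven, abs_neg,
      abs_of_nonpos (hq'_nonpos _ (neg_nonneg.2 hs))]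
    exact hbound _ (neg_nonneg.2 hs)

theorem stmt_9 (a μ A : ℝ) (ha : 0 < a) (hμ : 1 / 3 < μ) (hA : 0 < A)
    (q : ℝ → ℝ) (hq : ContDiff ℝ 2 q)
    (hode : ∀ s : ℝ, deriv (deriv q) s * q s + a * s * deriv q s * q s
      + μ * q s + (1 / 3) * s * deriv q s = 0)
    (hq0 : q 0 = A) (hq0' : deriv q 0 = 0)
    (hpos : ∀ s : ℝ, 0 < q s)
    (heven : ∀ s : ℝ, q (-s) = q s)
    (hanti : StrictAntiOn q (Set.Ioi 0))
    (hlim : Tendsto q atTop (nhds 0)) (hlim' : Tendsto (deriv q) atTop (nhds 0)) :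
    ∀ s : ℝ, |deriv q s| ≤ μ * Real.sqrt (3 * A / (1 + 3 * a * A)) :=
  stmt_9_general a μ A ha hμ q hq hode hq0 hq0' hpos heven hanti hlim'
end

section
/- For all s ≥ 0 one has q'(s) ≥ -μ·s. -/
/-!
For `s > 0` both terms `a s q' q` and `s q' / 3` of the equation are negative, so
`(q'' + μ) q ≥ 0` and hence `q'' ≥ -μ`; integrating from `q'(0) = 0` gives `q'(s) ≥ -μ s`.
-/

open MeasureTheory Filter Real

lemma neg_le_of_ode_relation {a μ s y y' y'' : ℝ} (ha : 0 ≤ a) (hs : 0 ≤ s) (hy : 0 < y)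
    (hy' : y' ≤ 0) (h : y'' * y + a * s * y' * y + μ * y + 1 / 3 * s * y' = 0) : -μ ≤ y'' := by
  have hprod : 0 ≤ (y'' + μ) * y :=
    calc 0 ≤ s * -y' * (a * y + 1 / 3) :=
          mul_nonneg (mul_nonneg hs (neg_nonneg.2 hy')) (by positivity)
      _ = (y'' + μ) * y := by linear_combination -h
  linarith [nonneg_of_mul_nonneg_left hprod hy]

theorem stmt_10_general (a μ : ℝ) (ha : 0 < a)
    (q : ℝ → ℝ) (hq : ContDiff ℝ 2 q)
    (hode : ∀ s : ℝ, deriv (deriv q) s * q s + a * s * deriv q s * q s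
      + μ * q s + (1 / 3) * s * deriv q s = 0)
    (hq0' : deriv q 0 = 0)
    (hpos : ∀ s : ℝ, 0 < q s)
    (hneg : ∀ s : ℝ, 0 < s → deriv q s < 0) :
    ∀ s : ℝ, 0 ≤ s → deriv q s ≥ -(μ * s) := by
  intro s hs
  have hdq : Differentiable ℝ (deriv q) := hq.differentiable_deriv_two
  have hbound : ∀ x ∈ interior (Set.Ici (0 : ℝ)), -μ ≤ deriv (deriv q) x := by
    rw [interior_Ici]
    intro x hx
    exact neg_le_of_ode_relation ha.le hx.le (hpos x) (hneg x hx).le (hode x)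
  have hmvt := (convex_Ici 0).mul_sub_le_image_sub_of_le_deriv hdq.continuous.continuousOn
    hdq.differentiableOn hbound 0 Set.self_mem_Ici s hs hs
  rw [hq0'] at hmvt
  linarith

theorem stmt_10 (a μ A : ℝ) (ha : 0 < a) (hμ : 1 / 3 < μ) (hA : 0 < A)
    (q : ℝ → ℝ) (hq : ContDiff ℝ 2 q)
    (hode : ∀ s : ℝ, deriv (deriv q) s * q s + a * s * deriv q s * q s
      + μ * q s + (1 / 3) * s * deriv q s = 0)
    (hq0 : q 0 = A) (hq0' : deriv q 0 = 0)
    (hpos : ∀ s : ℝ, 0 < q s)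
    (hneg : ∀ s : ℝ, 0 < s → deriv q s < 0) :
    ∀ s : ℝ, 0 ≤ s → deriv q s ≥ -(μ * s) :=
  stmt_10_general a μ ha q hq hode hq0' hpos hneg
end

section
/- For all s ≥ 0 one has the pointwise lower bound q(s) ≥ A - s·μ·√(3A/(1 + 3aA)). -/
open MeasureTheory Filter Real

theorem stmt_11 (a μ A : ℝ) (ha : 0 < a) (hμ : 1 / 3 < μ) (hA : 0 < A)
    (q : ℝ → ℝ) (hq : ContDiff ℝ 2 q)
    (hode : ∀ s : ℝ, deriv (deriv q) s * q s + a * s * deriv q s * q s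
      + μ * q s + (1 / 3) * s * deriv q s = 0)
    (hq0 : q 0 = A) (hq0' : deriv q 0 = 0)
    (hpos : ∀ s : ℝ, 0 < q s)
    (heven : ∀ s : ℝ, q (-s) = q s)
    (hanti : StrictAntiOn q (Set.Ioi 0))
    (hlim : Tendsto q atTop (nhds 0)) (hlim' : Tendsto (deriv q) atTop (nhds 0)) :
    ∀ s : ℝ, 0 ≤ s → q s ≥ A - s * μ * Real.sqrt (3 * A / (1 + 3 * a * A)) := by
  have hμ0 : (0:ℝ) < μ := by linarith
  have hd : Differentiable ℝ q := hq.differentiable (by norm_num)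
  have hq2 : ContDiff ℝ (1 + 1) q := by
    have h12 : ((1:WithTop ℕ∞) + 1) = 2 := by norm_num
    rw [h12]; exact hq
  have hd1 : ContDiff ℝ 1 (deriv q) := (contDiff_succ_iff_deriv.mp hq2).2.2
  have hdd : Differentiable ℝ (deriv q) := hd1.differentiable (by norm_num)
  have hcd : Continuous (deriv q) := hdd.continuous
  set M : ℝ := μ * Real.sqrt (3 * A / (1 + 3 * a * A)) with hM
  have hden : (0:ℝ) < 1 + 3 * a * A := by positivity
  have hMnn : 0 ≤ M := mul_nonneg hμ0.le (Real.sqrt_nonneg _)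
  have hM2 : M ^ 2 = μ ^ 2 * (3 * A / (1 + 3 * a * A)) := by
    have h3A : (0:ℝ) ≤ 3 * A / (1 + 3 * a * A) := by positivity
    rw [hM, mul_pow, Real.sq_sqrt h3A]
  -- the derivative is nonpositive on (0,∞)
  have hderiv_nonpos : ∀ s : ℝ, 0 < s → deriv q s ≤ 0 := by
    intro s hs
    have hder : Tendsto (slope q s) (nhdsWithin s (Set.Ioi s)) (nhds (deriv q s)) := by
      have h1 := ((hd s).hasDerivAt.hasDerivWithinAt (s := Set.Ioi s))
      rw [hasDerivWithinAt_iff_tendsto_slope] at h1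
      have h2 : Set.Ioi s \ {s} = Set.Ioi s := by
        apply Set.diff_singleton_eq_self; simp
      rwa [h2] at h1
    refine le_of_tendsto hder ?_
    filter_upwards [self_mem_nhdsWithin] with y hy
    have hqy : q y < q s := hanti hs (hs.trans hy) hy
    rw [slope_def_field]
    apply div_nonpos_of_nonpos_of_nonneg <;> simp at hy <;> linarith
  -- q is bounded by A on (0,∞)
  have hQleA : ∀ s : ℝ, 0 < s → q s ≤ A := by
    intro s hs
    have hcont : Tendsto q (nhdsWithin 0 (Set.Ioi 0)) (nhds A) := by
      have h0 : Tendsto q (nhdsWithin 0 (Set.Ioi 0)) (nhds (q 0)) :=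
        (hd 0).continuousAt.continuousWithinAt (s := Set.Ioi (0:ℝ))
      rwa [hq0] at h0
    refine ge_of_tendsto hcont ?_
    have h1 : ∀ᶠ y in nhdsWithin (0:ℝ) (Set.Ioi 0), y < s :=
      eventually_nhdsWithin_of_eventually_nhds (eventually_lt_nhds hs)
    filter_upwards [self_mem_nhdsWithin, h1] with y hy hys
    exact (hanti hy (hy.trans hys) hys).le
  -- second derivative bounded below by -μ on (0,∞)
  have hsec : ∀ t : ℝ, 0 < t → -μ ≤ deriv (deriv q) t := by
    intro t ht
    have h := hode t
    have h1 : deriv q t ≤ 0 := hderiv_nonpos t ht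
    have h2 := hpos t
    nlinarith [mul_nonneg (mul_nonneg (mul_nonneg ha.le ht.le) (neg_nonneg.2 h1)) h2.le,
      mul_nonneg ht.le (neg_nonneg.2 h1)]
  -- key step: a uniform lower bound -m on the derivative with m ≤ M
  have hkey : ∃ m : ℝ, 0 ≤ m ∧ m ≤ M ∧ ∀ t : ℝ, 0 < t → -m ≤ deriv q t := by
    by_cases hex : ∃ s₀ : ℝ, 0 < s₀ ∧ deriv q s₀ < 0
    · obtain ⟨s₀, hs₀, hc⟩ := hex
      set c := deriv q s₀ with hcdef
      obtain ⟨R, hR⟩ := eventually_atTop.mp (hlim'.eventually (eventually_gt_nhds (show c/2 < 0 by linarith)))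
      set R' : ℝ := max R s₀ with hR'
      have hR'0 : (0:ℝ) ≤ R' := le_trans hs₀.le (le_max_right _ _)
      obtain ⟨t₀, ht₀mem, hmin⟩ := isCompact_Icc.exists_isMinOn (Set.nonempty_Icc.2 hR'0)
        (hcd.continuousOn (s := Set.Icc 0 R'))
      have hminle : ∀ x ∈ Set.Icc 0 R', deriv q t₀ ≤ deriv q x := fun x hx => hmin hx
      have ht₀c : deriv q t₀ ≤ c := hminle s₀ ⟨hs₀.le, le_max_right _ _⟩
      have hglob : ∀ t : ℝ, 0 ≤ t → deriv q t₀ ≤ deriv q t := by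
        intro t ht
        rcases le_or_gt t R' with h | h
        · exact hminle t ⟨ht, h⟩
        · have : c/2 < deriv q t := hR t (le_trans (le_max_left _ _) h.le)
          linarith
      have ht₀pos : 0 < t₀ := by
        rcases eq_or_lt_of_le ht₀mem.1 with h | h
        · exfalso; rw [← h] at ht₀c; rw [hq0'] at ht₀c; linarith
        · exact h
      have hloc : IsLocalMin (deriv q) t₀ := by
        filter_upwards [isOpen_Ioi.mem_nhds ht₀pos] with y hy
        exact hglob y (le_of_lt hy)
      have hcrit : deriv (deriv q) t₀ = 0 := hloc.deriv_eq_zero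
      set m : ℝ := -(deriv q t₀) with hmdef
      have hm0 : 0 < m := by simp only [hmdef]; linarith
      set Q : ℝ := q t₀ with hQdef
      have hQ0 : 0 < Q := hpos t₀
      have hQA : Q ≤ A := hQleA t₀ ht₀pos
      -- ODE at the critical point
      have hstar : t₀ * m * (a * Q + 1/3) = μ * Q := by
        have h := hode t₀
        rw [hcrit] at h
        simp only [hmdef, hQdef]
        ring_nf
        ring_nf at h
        linarith
      -- m ≤ μ * t₀ from the second derivative bound
      have hmono : MonotoneOn (fun t => deriv q t + μ * t) (Set.Ici 0) := by
        apply monotoneOn_of_deriv_nonneg (convex_Ici 0)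
        · exact (hcd.add (continuous_const.mul continuous_id)).continuousOn
        · intro x _
          exact ((hdd x).add ((differentiable_id.const_mul μ) x)).differentiableWithinAt
        · intro x hx
          rw [interior_Ici] at hx
          have hder : deriv (fun t => deriv q t + μ * t) x = deriv (deriv q) x + μ := by
            have h1 : HasDerivAt (fun t => deriv q t + μ * t) (deriv (deriv q) x + μ * 1) x :=
              ((hdd x).hasDerivAt).add ((hasDerivAt_id x).const_mul μ)
            simpa using h1.deriv
          rw [hder]
          linarith [hsec x hx]
      have hmt : m ≤ μ * t₀ := by
        have := hmono (Set.self_mem_Ici) (Set.mem_Ici.2 ht₀pos.le) ht₀pos.le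
        simp only [hq0'] at this
        simp only [hmdef]; linarith
      -- combine: m² (aQ + 1/3) ≤ μ² Q
      have hm2 : m^2 * (a * Q + 1/3) ≤ μ^2 * Q := by
        have h1 : m * (t₀ * m * (a * Q + 1/3)) = m * (μ * Q) := by rw [hstar]
        have h2 : (0:ℝ) < a * Q + 1/3 := by positivity
        nlinarith [mul_le_mul_of_nonneg_right hmt (mul_nonneg hm0.le h2.le)]
      have h2 : (0:ℝ) < a * Q + 1/3 := by positivity
      have h2A : (0:ℝ) < a * A + 1/3 := by positivity
      have hm2b : m^2 ≤ μ^2 * Q / (a * Q + 1/3) := (le_div_iff₀ h2).2 hm2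
      have hmono2 : μ^2 * Q / (a * Q + 1/3) ≤ μ^2 * A / (a * A + 1/3) := by
        rw [div_le_div_iff₀ h2 h2A]
        nlinarith [mul_nonneg (sq_nonneg μ) (sub_nonneg.2 hQA)]
      have hm2M : m^2 ≤ M^2 := by
        rw [hM2, show μ^2 * (3 * A / (1 + 3 * a * A)) = μ^2 * A / (a * A + 1/3) by
          field_simp; ring]
        exact hm2b.trans hmono2
      have hmM : m ≤ M := by
        calc m = Real.sqrt (m^2) := (Real.sqrt_sq hm0.le).symm
          _ ≤ Real.sqrt (M^2) := Real.sqrt_le_sqrt hm2M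
          _ = M := Real.sqrt_sq hMnn
      exact ⟨m, hm0.le, hmM, fun t ht => by linarith [hglob t ht.le]⟩
    · push_neg at hex
      refine ⟨0, le_refl _, hMnn, fun t ht => ?_⟩
      have := hex t ht
      linarith
  -- conclude by the mean value inequality
  obtain ⟨m, hm0, hmM, hmb⟩ := hkey
  intro s hs
  have hmono : MonotoneOn (fun t => q t + m * t) (Set.Ici 0) := by
    apply monotoneOn_of_deriv_nonneg (convex_Ici 0)
    · exact (hd.continuous.add (continuous_const.mul continuous_id)).continuousOn
    · intro x _
      exact ((hd x).add ((differentiable_id.const_mul m) x)).differentiableWithinAt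
    · intro x hx
      rw [interior_Ici] at hx
      have hder : deriv (fun t => q t + m * t) x = deriv q x + m := by
        have h1 : HasDerivAt (fun t => q t + m * t) (deriv q x + m * 1) x :=
          ((hd x).hasDerivAt).add ((hasDerivAt_id x).const_mul m)
        simpa using h1.deriv
      rw [hder]
      linarith [hmb x hx]
  have h1 := hmono (Set.self_mem_Ici) (Set.mem_Ici.2 hs) hs
  simp only [hq0, mul_zero, add_zero] at h1
  have h2 : m * s ≤ M * s := mul_le_mul_of_nonneg_right hmM hs
  have h3 : s * μ * Real.sqrt (3 * A / (1 + 3 * a * A)) = M * s := by rw [hM]; ring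
  linarith
end

section
/- The following lower bound holds: ∫_0^∞ q(s)² ds ≥ A^{5/2}·√(1 + 3aA) / (3·√3·μ). -/
open MeasureTheory Filter Real

theorem stmt_13 (a μ A : ℝ) (ha : 0 < a) (hμ : 1 / 3 < μ) (hA : 0 < A)
    (q : ℝ → ℝ) (hq : ContDiff ℝ 2 q)
    (hode : ∀ s : ℝ, deriv (deriv q) s * q s + a * s * deriv q s * q s
      + μ * q s + (1 / 3) * s * deriv q s = 0)
    (hq0 : q 0 = A) (hq0' : deriv q 0 = 0)
    (hpos : ∀ s : ℝ, 0 < q s)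
    (heven : ∀ s : ℝ, q (-s) = q s)
    (hanti : StrictAntiOn q (Set.Ioi 0))
    (hlim : Tendsto q atTop (nhds 0)) (hlim' : Tendsto (deriv q) atTop (nhds 0))
    (hint2 : Integrable (fun s : ℝ => q s ^ 2)) :
    ∫ s in Set.Ioi (0 : ℝ), q s ^ 2
      ≥ A ^ ((5 : ℝ) / 2) * Real.sqrt (1 + 3 * a * A) / (3 * Real.sqrt 3 * μ) := by
  have hμ0 : 0 < μ := lt_trans (by norm_num) hμ
  -- regularity
  obtain ⟨hqd, hq1⟩ : Differentiable ℝ q ∧ ContDiff ℝ 1 (deriv q) := by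
    have h := contDiff_succ_iff_deriv.mp (show ContDiff ℝ (1+1) q by exact_mod_cast hq)
    exact ⟨h.1, h.2.2⟩
  obtain ⟨hq1d, hq2c⟩ : Differentiable ℝ (deriv q) ∧ Continuous (deriv (deriv q)) :=
    contDiff_one_iff_deriv.mp hq1
  have hqc : Continuous q := hqd.continuous
  have hq1c : Continuous (deriv q) := hq1d.continuous
  -- q ≤ A on [0, ∞)
  have hle : ∀ s : ℝ, 0 ≤ s → q s ≤ A := by
    intro s hs
    rcases eq_or_lt_of_le hs with h | h
    · rw [← h, hq0]
    · have htend : Tendsto q (nhdsWithin 0 (Set.Ioi 0)) (nhds A) := by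
        rw [← hq0]
        exact (hqc.tendsto 0).mono_left nhdsWithin_le_nhds
      refine ge_of_tendsto htend ?_
      filter_upwards [self_mem_nhdsWithin,
        eventually_nhdsWithin_of_eventually_nhds (Filter.Tendsto.eventually_lt_const h tendsto_id)]
        with t ht1 ht2
      exact (hanti ht1 h ht2).le
  -- the constant c
  set c : ℝ := Real.sqrt (2*a/3 + 1/(3*A)) with hc_def
  have hcarg : 0 < 2*a/3 + 1/(3*A) := by positivity
  have hc2 : c^2 = 2*a/3 + 1/(3*A) := Real.sq_sqrt hcarg.le
  have hc0 : 0 ≤ c := Real.sqrt_nonneg _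
  -- auxiliary functions
  set Ψ : ℝ → ℝ := fun s => -(deriv q s * (q s)^2) - s * (a*(q s)^3/3 + (q s)^2/6)
      - (2*c/3) * (q s)^3 with hΨ_def
  set ψ : ℝ → ℝ := fun s => -(deriv (deriv q) s * (q s)^2
        + deriv q s * (2 * q s ^ 1 * deriv q s))
      - (1 * (a*(q s)^3/3 + (q s)^2/6)
        + s * (a * (3 * q s ^ 2 * deriv q s)/3 + (2 * q s ^ 1 * deriv q s)/6))
      - (2*c/3) * (3 * q s ^ 2 * deriv q s) with hψ_def
  have hderiv : ∀ s : ℝ, HasDerivAt Ψ (ψ s) s := by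
    intro s
    have h1 : HasDerivAt q (deriv q s) s := (hqd s).hasDerivAt
    have h2 : HasDerivAt (deriv q) (deriv (deriv q) s) s := (hq1d s).hasDerivAt
    have f1 : HasDerivAt (fun x => -(deriv q x * (q x)^2))
        (-(deriv (deriv q) s * (q s)^2 + deriv q s * (2 * q s ^ 1 * deriv q s))) s :=
      (h2.mul (h1.pow 2)).neg
    have g1 : HasDerivAt (fun x => a*(q x)^3/3 + (q x)^2/6)
        (a * (3 * q s ^ 2 * deriv q s)/3 + (2 * q s ^ 1 * deriv q s)/6) s :=
      (((h1.pow 3).const_mul a).div_const 3).add ((h1.pow 2).div_const 6)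
    have f2 : HasDerivAt (fun x => x * (a*(q x)^3/3 + (q x)^2/6))
        (1 * (a*(q s)^3/3 + (q s)^2/6)
          + s * (a * (3 * q s ^ 2 * deriv q s)/3 + (2 * q s ^ 1 * deriv q s)/6)) s :=
      (hasDerivAt_id s).mul g1
    have f3 : HasDerivAt (fun x => (2*c/3) * (q x)^3)
        ((2*c/3) * (3 * q s ^ 2 * deriv q s)) s := (h1.pow 3).const_mul _
    exact (f1.sub f2).sub f3
  have hψc : Continuous ψ := by
    rw [hψ_def]
    fun_prop
  -- pointwise bound ψ s ≤ μ q s ^ 2 for s ≥ 0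
  have hkey : ∀ s : ℝ, 0 ≤ s → ψ s ≤ μ * q s ^ 2 := by
    intro s hs
    have hode' := hode s
    have hqs := hpos s
    have hqA := hle s hs
    have hc2' : 3 * A * c^2 = 2*a*A + 1 := by
      rw [hc2]; field_simp
    have hsq : 0 ≤ q s * (deriv q s + c * q s / 2)^2 :=
      mul_nonneg hqs.le (sq_nonneg _)
    have hsq2 : 0 ≤ (q s)^2 * (A - q s) :=
      mul_nonneg (sq_nonneg _) (sub_nonneg.mpr hqA)
    set x := deriv q s with hx
    set y := deriv (deriv q) s with hy
    set u := q s with hu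
    have heq : ψ s = μ * u^2 - (2*u*x^2 + 2*c*u^2*x + a*u^3/3 + u^2/6) := by
      simp only [hψ_def]
      linear_combination (-(u)) * hode'
    have h12 : 0 ≤ 12*A*(u*(x + c*u/2)^2) := by positivity
    have h7 : 6*A*(2*u*x^2 + 2*c*u^2*x + a*u^3/3 + u^2/6)
        = 12*A*(u*(x + c*u/2)^2) + u^2*(A-u) := by
      have h6 : 6*A*(2*u*x^2 + 2*c*u^2*x + a*u^3/3 + u^2/6)
          = 12*A*(u*(x + c*u/2)^2) + u^2*(A-u) + (2*a*A+1 - 3*A*c^2)*u^3 := by ring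
      rw [h6, hc2']; ring
    have hnn : 0 ≤ 2*u*x^2 + 2*c*u^2*x + a*u^3/3 + u^2/6 := by
      nlinarith [h7, h12, hsq2, hA]
    rw [show ψ s ≤ μ * q s ^ 2 ↔ ψ s ≤ μ * u ^ 2 from Iff.rfl, heq]
    linarith [hnn]
  set L : ℝ := ∫ s in Set.Ioi (0:ℝ), q s ^ 2 with hL_def
  have hq2cont : Continuous fun s : ℝ => q s ^ 2 := by fun_prop
  -- bound for every T ≥ 0
  have hbound : ∀ T : ℝ, 0 ≤ T → Ψ T - Ψ 0 ≤ μ * L := by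
    intro T hT
    have hFTC : ∫ x in (0:ℝ)..T, ψ x = Ψ T - Ψ 0 :=
      intervalIntegral.integral_eq_sub_of_hasDerivAt (fun x _ => hderiv x)
        (hψc.intervalIntegrable 0 T)
    have hmono : ∫ x in (0:ℝ)..T, ψ x ≤ ∫ x in (0:ℝ)..T, μ * q x ^ 2 :=
      intervalIntegral.integral_mono_on hT (hψc.intervalIntegrable 0 T)
        ((continuous_const.mul hq2cont).intervalIntegrable 0 T)
        (fun x hx => hkey x hx.1)
    have h1 : ∫ x in (0:ℝ)..T, μ * q x ^ 2 = μ * ∫ x in (0:ℝ)..T, q x ^ 2 :=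
      intervalIntegral.integral_const_mul μ _
    have h2 : ∫ x in (0:ℝ)..T, q x ^ 2 ≤ L := by
      rw [intervalIntegral.integral_of_le hT]
      apply setIntegral_mono_set hint2.integrableOn
        (Eventually.of_forall fun x => sq_nonneg (q x))
      exact HasSubset.Subset.eventuallyLE Set.Ioc_subset_Ioi_self
    calc Ψ T - Ψ 0 = ∫ x in (0:ℝ)..T, ψ x := hFTC.symm
      _ ≤ ∫ x in (0:ℝ)..T, μ * q x ^ 2 := hmono
      _ = μ * ∫ x in (0:ℝ)..T, q x ^ 2 := h1
      _ ≤ μ * L := mul_le_mul_of_nonneg_left h2 hμ0.le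
  -- T * q T ^ 2 → 0
  have hItend : Tendsto (fun T => ∫ x in (0:ℝ)..T, q x ^ 2) atTop (nhds L) :=
    intervalIntegral_tendsto_integral_Ioi 0 hint2.integrableOn tendsto_id
  have hhalf : Tendsto (fun T : ℝ => T / 2) atTop atTop :=
    Tendsto.atTop_div_const two_pos tendsto_id
  have hItend2 : Tendsto (fun T => ∫ x in (0:ℝ)..(T/2), q x ^ 2) atTop (nhds L) :=
    hItend.comp hhalf
  have hdiff : Tendsto (fun T => ∫ x in (T/2)..T, q x ^ 2) atTop (nhds 0) := by
    have heq : ∀ T : ℝ, (∫ x in (0:ℝ)..T, q x ^ 2) - (∫ x in (0:ℝ)..(T/2), q x ^ 2)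
        = ∫ x in (T/2)..T, q x ^ 2 := fun T =>
      intervalIntegral.integral_interval_sub_left (hq2cont.intervalIntegrable 0 T)
        (hq2cont.intervalIntegrable 0 (T/2))
    have h := hItend.sub hItend2
    rw [sub_self] at h
    exact h.congr' (Eventually.of_forall fun T => heq T)
  have hsqz : Tendsto (fun T : ℝ => T * q T ^ 2) atTop (nhds 0) := by
    have hup : ∀ᶠ T : ℝ in atTop, T / 2 * q T ^ 2 ≤ ∫ x in (T/2)..T, q x ^ 2 := by
      filter_upwards [eventually_gt_atTop 0] with T hT
      have h1 : ∫ x in (T/2)..T, q T ^ 2 ≤ ∫ x in (T/2)..T, q x ^ 2 := by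
        apply intervalIntegral.integral_mono_on (by linarith)
          intervalIntegrable_const (hq2cont.intervalIntegrable _ _)
        intro x hx
        have hx0 : 0 < x := lt_of_lt_of_le (by linarith) hx.1
        have hqTx : q T ≤ q x := by
          rcases eq_or_lt_of_le hx.2 with h | h
          · rw [h]
          · exact (hanti (Set.mem_Ioi.mpr hx0) (Set.mem_Ioi.mpr hT) h).le
        exact pow_le_pow_left₀ (hpos T).le hqTx 2
      rwa [intervalIntegral.integral_const, smul_eq_mul,
        show T - T/2 = T/2 by ring] at h1
    have hlo : ∀ᶠ T : ℝ in atTop, 0 ≤ T / 2 * q T ^ 2 := by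
      filter_upwards [eventually_ge_atTop 0] with T hT
      positivity
    have h0 : Tendsto (fun T : ℝ => T / 2 * q T ^ 2) atTop (nhds 0) :=
      tendsto_of_tendsto_of_tendsto_of_le_of_le' tendsto_const_nhds hdiff hlo hup
    have heq2 : (fun T : ℝ => T * q T ^ 2) = fun T => 2 * (T / 2 * q T ^ 2) := by
      funext T; ring
    rw [heq2]
    simpa using h0.const_mul 2
  -- Ψ tends to 0
  have hΨtend : Tendsto Ψ atTop (nhds 0) := by
    have hq2t : Tendsto (fun s => q s ^ 2) atTop (nhds 0) := by
      simpa using hlim.pow 2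
    have hq3t : Tendsto (fun s => q s ^ 3) atTop (nhds 0) := by
      simpa using hlim.pow 3
    have t1 : Tendsto (fun s => -(deriv q s * q s ^ 2)) atTop (nhds 0) := by
      simpa using (hlim'.mul hq2t).neg
    have t2 : Tendsto (fun s : ℝ => s * (a * q s ^ 3 / 3 + q s ^ 2 / 6)) atTop (nhds 0) := by
      have hmid : (fun s : ℝ => s * (a * q s ^ 3 / 3 + q s ^ 2 / 6))
          = fun s : ℝ => (s * q s ^ 2) * (a * q s / 3 + 1/6) := by funext s; ring
      rw [hmid]
      have hfac : Tendsto (fun s => a * q s / 3 + 1/6) atTop (nhds (a * 0 / 3 + 1/6)) :=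
        ((hlim.const_mul a).div_const 3).add tendsto_const_nhds
      simpa using hsqz.mul hfac
    have t3 : Tendsto (fun s => 2 * c / 3 * q s ^ 3) atTop (nhds 0) := by
      simpa using hq3t.const_mul (2 * c / 3)
    have h := (t1.sub t2).sub t3
    rw [hΨ_def]
    simpa using h
  have hΨ0 : Ψ 0 = -(2*c/3) * A^3 := by
    simp only [hΨ_def]
    rw [hq0, hq0']
    ring
  have hmain : 2*c/3 * A^3 ≤ μ * L := by
    have hev : ∀ᶠ T : ℝ in atTop, Ψ T ≤ μ * L + Ψ 0 := by
      filter_upwards [eventually_ge_atTop 0] with T hT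
      linarith [hbound T hT]
    have h := le_of_tendsto hΨtend hev
    rw [hΨ0] at h
    linarith
  -- final algebra
  have hA52 : A ^ ((5:ℝ)/2) = A^2 * Real.sqrt A := by
    rw [Real.sqrt_eq_rpow, ← Real.rpow_natCast A 2, ← Real.rpow_add hA]
    norm_num
  have hRHS : Real.sqrt 3 * c * Real.sqrt A = Real.sqrt (2*a*A + 1) := by
    rw [hc_def, ← Real.sqrt_mul (by norm_num : (0:ℝ) ≤ 3),
      ← Real.sqrt_mul (by positivity)]
    congr 1
    field_simp
  have hsqrtkey : Real.sqrt (1 + 3*a*A) ≤ 2 * Real.sqrt (2*a*A+1) := by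
    have h4 : (2:ℝ) * Real.sqrt (2*a*A+1) = Real.sqrt (4 * (2*a*A+1)) := by
      rw [Real.sqrt_mul (by norm_num : (0:ℝ) ≤ 4),
        show Real.sqrt 4 = 2 by
          rw [show (4:ℝ) = 2^2 by norm_num, Real.sqrt_sq (by norm_num : (0:ℝ) ≤ 2)]]
    rw [h4]
    apply Real.sqrt_le_sqrt
    linarith only [mul_nonneg ha.le hA.le]
  have hfin : A ^ ((5:ℝ)/2) * Real.sqrt (1+3*a*A) ≤ 2 * Real.sqrt 3 * c * A^3 := by
    rw [hA52]
    calc A^2 * Real.sqrt A * Real.sqrt (1+3*a*A)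
        ≤ A^2 * Real.sqrt A * (2 * Real.sqrt (2*a*A+1)) :=
          mul_le_mul_of_nonneg_left hsqrtkey (by positivity)
      _ = 2 * Real.sqrt 3 * c * (A^2 * (Real.sqrt A * Real.sqrt A)) := by
          rw [← hRHS]; ring
      _ = 2 * Real.sqrt 3 * c * A^3 := by
          rw [Real.mul_self_sqrt hA.le]; ring
  rw [ge_iff_le, div_le_iff₀ (by positivity : (0:ℝ) < 3 * Real.sqrt 3 * μ)]
  have h3 : 2 * Real.sqrt 3 * c * A^3 ≤ L * (3 * Real.sqrt 3 * μ) := by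
    have h := mul_le_mul_of_nonneg_left hmain
      (by positivity : (0:ℝ) ≤ 3 * Real.sqrt 3)
    linarith only [h]
  exact le_trans hfin h3
end

section
/- For every M > 0 there exists A₀ > 0 such that for every A ≥ A₀ and every function q satisfying the hypotheses with q(0) = A, one has both ∫_{-∞}^{∞} q(s) ds ≥ M and ∫_{-∞}^{∞} q(s)² ds ≥ M. -/
/-!
Since `q' ≤ 0` and `q > 0` on `(0, ∞)`, the equation gives `(q'' + μ) q = -s q' (a q + 1/3) ≥ 0`,
so `q'' ≥ -μ` there. Integrating twice from `0`, where `q' = 0`, yields `q s ≥ A - μ s² / 2`, so on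
`[0, 1]` the profile stays above `A - |μ|`, which makes both `∫ q` and `∫ q²` large once `A` is.
-/

open MeasureTheory Filter Real Set Topology

lemma AntitoneOn.deriv_nonpos_of_mem_nhds {f : ℝ → ℝ} {U : Set ℝ} {x : ℝ}
    (hf : AntitoneOn f U) (hU : U ∈ 𝓝 x) : deriv f x ≤ 0 := by
  rw [← derivWithin_of_mem_nhds hU]
  exact hf.derivWithin_nonpos

lemma sub_le_sub_of_deriv_le_deriv_of_le {f g : ℝ → ℝ} {x₀ x : ℝ}
    (hf : Differentiable ℝ f) (hg : Differentiable ℝ g)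
    (hderiv : ∀ y, x₀ < y → deriv g y ≤ deriv f y) (hx : x₀ ≤ x) :
    g x - g x₀ ≤ f x - f x₀ := by
  have hmono : MonotoneOn (f - g) (Ici x₀) := by
    refine monotoneOn_of_deriv_nonneg (convex_Ici x₀) (hf.sub hg).continuous.continuousOn
      (hf.sub hg).differentiableOn fun y hy => ?_
    rw [interior_Ici] at hy
    rw [deriv_sub (hf y) (hg y), sub_nonneg]
    exact hderiv y hy
  have := hmono self_mem_Ici hx hx
  simp only [Pi.sub_apply] at this
  linarith

lemma sub_mul_sq_div_two_le_of_neg_le_deriv_deriv {f : ℝ → ℝ} {c x : ℝ} (hf : ContDiff ℝ 2 f)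
    (hf'0 : deriv f 0 = 0) (hf'' : ∀ y, 0 < y → -c ≤ deriv (deriv f) y) (hx : 0 ≤ x) :
    f 0 - c * x ^ 2 / 2 ≤ f x := by
  have hd : Differentiable ℝ f := hf.differentiable two_ne_zero
  have hd' : Differentiable ℝ (deriv f) :=
    (hf.iterate_deriv' 1 1).differentiable one_ne_zero
  have hf' : ∀ y, 0 ≤ y → -(c * y) ≤ deriv f y := fun y hy => by
    have := sub_le_sub_of_deriv_le_deriv_of_le hd' (g := fun y => -(c * y)) (by fun_prop)
      (fun z hz => by simpa using hf'' z hz) hy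
    simpa [hf'0] using this
  have := sub_le_sub_of_deriv_le_deriv_of_le hd (g := fun y => -(c * y ^ 2 / 2)) (by fun_prop)
    (fun y hy => by simpa [mul_comm, mul_div_assoc] using hf' y hy.le) hx
  linarith

lemma neg_le_deriv_deriv_of_profile_eq {a μ : ℝ} {q : ℝ → ℝ} (ha : 0 ≤ a)
    (hode : ∀ s : ℝ, deriv (deriv q) s * q s + a * s * deriv q s * q s
      + μ * q s + (1 / 3) * s * deriv q s = 0)
    (hpos : ∀ s, 0 < q s) (hanti : AntitoneOn q (Ioi 0)) {s : ℝ} (hs : 0 < s) :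
    -μ ≤ deriv (deriv q) s := by
  have hq' : deriv q s ≤ 0 := hanti.deriv_nonpos_of_mem_nhds (Ioi_mem_nhds hs)
  have hrhs : 0 ≤ s * -deriv q s * (a * q s + 1 / 3) :=
    mul_nonneg (mul_nonneg hs.le (neg_nonneg.2 hq')) (by positivity [(hpos s).le])
  have : 0 ≤ (deriv (deriv q) s + μ) * q s := by linarith [hode s]
  linarith [(mul_nonneg_iff_of_pos_right (hpos s)).mp this]

lemma mul_sub_le_integral_of_le_on_Icc {f : ℝ → ℝ} {m x₀ x₁ : ℝ} (hf : Integrable f)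
    (hf0 : ∀ x, 0 ≤ f x) (hx : x₀ ≤ x₁) (hm : ∀ x ∈ Icc x₀ x₁, m ≤ f x) :
    m * (x₁ - x₀) ≤ ∫ x, f x := by
  calc m * (x₁ - x₀) = m * volume.real (Icc x₀ x₁) := by
        rw [measureReal_def, volume_Icc, ENNReal.toReal_ofReal (sub_nonneg.2 hx)]
    _ ≤ ∫ x in Icc x₀ x₁, f x :=
        setIntegral_ge_of_const_le_real measurableSet_Icc (by simp) hm hf.integrableOn
    _ ≤ ∫ x, f x := setIntegral_le_integral hf (Eventually.of_forall hf0)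

theorem stmt_15_general (a μ : ℝ) (ha : 0 < a) :
    ∀ M : ℝ, 0 < M → ∃ A₀ : ℝ, 0 < A₀ ∧
      ∀ A : ℝ, A₀ ≤ A → ∀ q : ℝ → ℝ,
        (ContDiff ℝ 2 q ∧
        (∀ s : ℝ, deriv (deriv q) s * q s + a * s * deriv q s * q s
          + μ * q s + (1 / 3) * s * deriv q s = 0) ∧
        q 0 = A ∧ deriv q 0 = 0 ∧
        (∀ s : ℝ, 0 < q s) ∧
        (∀ s : ℝ, q (-s) = q s) ∧
        StrictAntiOn q (Set.Ioi 0) ∧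
        Tendsto q atTop (nhds 0) ∧
        Tendsto (deriv q) atTop (nhds 0) ∧
        Integrable q ∧
        Integrable (fun s : ℝ => q s ^ 2) ∧
        Integrable (fun s : ℝ => deriv q s ^ 2)) →
        M ≤ (∫ s : ℝ, q s) ∧ M ≤ ∫ s : ℝ, q s ^ 2 := by
  intro M hM
  refine ⟨M + 1 + |μ|, by positivity, ?_⟩
  rintro A hA q ⟨hq, hode, rfl, hq'0, hpos, -, hanti, -, -, hint, hint2, -⟩
  have hlow : ∀ s ∈ Icc (0 : ℝ) 1, M + 1 ≤ q s := fun s hs => by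
    have := sub_mul_sq_div_two_le_of_neg_le_deriv_deriv hq hq'0
      (fun y hy => neg_le_deriv_deriv_of_profile_eq ha.le hode hpos hanti.antitoneOn hy) hs.1
    have hs2 : s ^ 2 ≤ 1 := pow_le_one₀ hs.1 hs.2
    nlinarith [le_abs_self μ, abs_nonneg μ, sq_nonneg s]
  have hlow2 : ∀ s ∈ Icc (0 : ℝ) 1, (M + 1) ^ 2 ≤ q s ^ 2 := fun s hs =>
    pow_le_pow_left₀ (by positivity) (hlow s hs) 2
  constructor
  · linarith [mul_sub_le_integral_of_le_on_Icc hint (fun s => (hpos s).le) zero_le_one hlow]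
  · nlinarith [mul_sub_le_integral_of_le_on_Icc hint2 (fun s => sq_nonneg (q s)) zero_le_one
      hlow2]

theorem stmt_15 (a μ : ℝ) (ha : 0 < a) (hμ : 1 / 3 < μ) :
    ∀ M : ℝ, 0 < M → ∃ A₀ : ℝ, 0 < A₀ ∧
      ∀ A : ℝ, A₀ ≤ A → ∀ q : ℝ → ℝ,
        (ContDiff ℝ 2 q ∧
        (∀ s : ℝ, deriv (deriv q) s * q s + a * s * deriv q s * q s
          + μ * q s + (1 / 3) * s * deriv q s = 0) ∧
        q 0 = A ∧ deriv q 0 = 0 ∧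
        (∀ s : ℝ, 0 < q s) ∧
        (∀ s : ℝ, q (-s) = q s) ∧
        StrictAntiOn q (Set.Ioi 0) ∧
        Tendsto q atTop (nhds 0) ∧
        Tendsto (deriv q) atTop (nhds 0) ∧
        Integrable q ∧
        Integrable (fun s : ℝ => q s ^ 2) ∧
        Integrable (fun s : ℝ => deriv q s ^ 2)) →
        M ≤ (∫ s : ℝ, q s) ∧ M ≤ ∫ s : ℝ, q s ^ 2 :=
  stmt_15_general a μ ha
end

section
/- For all s ≥ 1 the following two-sided bound holds: q(1)·e^{3a·q(1)} / ( s^{3μ}·exp(3μ + (3μ/s)·√(3A/(1 + 3aA))) ) < q(s)·e^{3a·q(s)} ≤ A·e^{3A(1+a)} / ( s^{3μ}·exp(3μ - (3μ/s)·√(3A/(1 + 3aA))) ). -/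
/-!
Write `u = log q + 3 a q`. Dividing the equation by `q` gives `t u' / 3 = -(μ + q'')`, so
`Φ(t) = u(t) + 3 μ log t + 3 q'(t) / t` has `Φ' = -3 q' / t² ≥ 0`, while `Φ + 3 q` is
nonincreasing on `[1, ∞)`. Comparing `Φ(s)` with `Φ(1)` gives
`u(s) = u(1) - 3 μ log s + O(1)`, and the `O(1)` terms are controlled by three bounds on `q'`:
`-q'(t) ≤ μ t` (as `q'' ≥ -μ`), `-q'(t) ≤ μ √(3A / (1 + 3aA))` (at the first time `-q'` would
exceed this level the equation forces `q'' > 0`), and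
`3 q'(1) + 3μ + log q(1) + 3a q(1) ≤ log A + 3aA` (integrating the equation over `[0, 1]`).
-/

open MeasureTheory Filter Real
open Set

theorem AntitoneOn.deriv_nonpos_of_isOpen {f : ℝ → ℝ} {s : Set ℝ} (hf : AntitoneOn f s)
    (hs : IsOpen s) {x : ℝ} (hx : x ∈ s) : deriv f x ≤ 0 := by
  rw [← derivWithin_of_isOpen hs hx]
  exact hf.derivWithin_nonpos

theorem StrictAntiOn.apply_lt_of_Ioi {f : ℝ → ℝ} {a t : ℝ} (hd : Differentiable ℝ f)
    (hf : StrictAntiOn f (Ioi a)) (ht : a < t) : f t < f a := by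
  have hanti : AntitoneOn f (Ici a) :=
    antitoneOn_of_deriv_nonpos (convex_Ici a) hd.continuous.continuousOn hd.differentiableOn
      fun x hx => hf.antitoneOn.deriv_nonpos_of_isOpen isOpen_Ioi (by rwa [interior_Ici] at hx)
  have hm : a < (a + t) / 2 := by linarith
  calc f t < f ((a + t) / 2) := hf hm ht (by linarith)
    _ ≤ f a := hanti self_mem_Ici hm.le hm.le

theorem mul_exp_eq_exp_log_add {x : ℝ} (hx : 0 < x) (y : ℝ) : x * exp y = exp (log x + y) := by
  rw [exp_add, exp_log hx]

theorem mul_exp_div_rpow_mul_exp {x s : ℝ} (hx : 0 < x) (hs : 0 < s) (y p z : ℝ) :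
    x * exp y / (s ^ p * exp z) = exp (log x + y - p * log s - z) := by
  rw [rpow_def_of_pos hs, exp_sub, exp_sub, exp_add, exp_log hx, mul_comm (log s), div_div]

def ProfileODE (a μ : ℝ) (q : ℝ → ℝ) : Prop :=
  ∀ s, deriv (deriv q) s * q s + a * s * deriv q s * q s + μ * q s + (1 / 3) * s * deriv q s = 0

noncomputable def profileFunctional (a μ : ℝ) (q : ℝ → ℝ) (t : ℝ) : ℝ :=
  log (q t) + 3 * a * q t + 3 * μ * log t + 3 * deriv q t / t

namespace ProfileODE

variable {a μ : ℝ} {q : ℝ → ℝ}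

theorem deriv_deriv_eq (hode : ProfileODE a μ q) {s : ℝ} (hs : q s ≠ 0) :
    deriv (deriv q) s = -μ - s * deriv q s * (a + 1 / (3 * q s)) := by
  field_simp
  linear_combination 3 * hode s

theorem neg_le_deriv_deriv (hode : ProfileODE a μ q) (ha : 0 ≤ a) {t : ℝ} (ht : 0 ≤ t)
    (hqt : 0 < q t) (hq't : deriv q t ≤ 0) : -μ ≤ deriv (deriv q) t := by
  have : 0 ≤ t * -deriv q t * (a + 1 / (3 * q t)) :=
    mul_nonneg (mul_nonneg ht (neg_nonneg.2 hq't)) (by positivity)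
  rw [hode.deriv_deriv_eq hqt.ne']
  linarith

theorem neg_deriv_le_mul (hode : ProfileODE a μ q) (ha : 0 ≤ a)
    (hd' : Differentiable ℝ (deriv q)) (hpos : ∀ t, 0 < q t)
    (hq' : ∀ t, 0 ≤ t → deriv q t ≤ 0) (h0 : deriv q 0 = 0) {t : ℝ} (ht : 0 ≤ t) :
    -deriv q t ≤ μ * t := by
  have := (convex_Ici 0).image_sub_le_mul_sub_of_deriv_le (f := fun x => -deriv q x)
    hd'.neg.continuous.continuousOn hd'.neg.differentiableOn (C := μ) (fun x hx => ?_)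
    0 self_mem_Ici t ht ht
  · simpa [h0] using this
  · rw [interior_Ici] at hx
    rw [deriv.fun_neg]
    linarith [hode.neg_le_deriv_deriv ha hx.le (hpos x) (hq' x hx.le)]

theorem neg_deriv_le_mul_sqrt (hode : ProfileODE a μ q) (ha : 0 ≤ a) (hμ : 0 < μ)
    (hd' : Differentiable ℝ (deriv q)) (hpos : ∀ t, 0 < q t)
    (hq' : ∀ t, 0 ≤ t → deriv q t ≤ 0) (h0 : deriv q 0 = 0) (hlt : ∀ t, 0 < t → q t < q 0)
    {t : ℝ} (ht : 0 ≤ t) : -deriv q t ≤ μ * √(3 * q 0 / (1 + 3 * a * q 0)) := by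
  set K := √(3 * q 0 / (1 + 3 * a * q 0)) with hK
  have hq0 := hpos 0
  have hK0 : 0 < K := sqrt_pos.2 (by positivity)
  have hK2 : K ^ 2 * (1 + 3 * a * q 0) = 3 * q 0 := by
    rw [hK, sq_sqrt (by positivity)]
    field_simp
  refine image_le_of_deriv_right_lt_deriv_boundary' (f := fun x => -deriv q x)
    (f' := fun x => -deriv (deriv q) x) (B := fun _ => μ * K) (B' := 0)
    hd'.neg.continuous.continuousOn (fun x _ => (hd' x).hasDerivAt.neg.hasDerivWithinAt)
    (by simp only [h0, neg_zero]; positivity) continuousOn_const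
    (fun x _ => hasDerivWithinAt_const x _ _) ?_ ⟨ht, le_rfl⟩
  intro x hx hwx
  have hx0 : 0 < x := hx.1.lt_of_ne fun h => by
    subst h
    rw [h0, neg_zero] at hwx
    linarith [mul_pos hμ hK0]
  have hxK : K ≤ x := by
    have := hode.neg_deriv_le_mul ha hd' hpos hq' h0 hx.1
    exact le_of_mul_le_mul_left (by linarith) hμ
  have hqx := hpos x
  have hlt' : 3 * q x < K ^ 2 * (3 * a * q x + 1) := by
    have : 3 * q x * (1 + 3 * a * q 0) < K ^ 2 * (3 * a * q x + 1) * (1 + 3 * a * q 0) := by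
      rw [mul_right_comm (K ^ 2), hK2]
      nlinarith [hlt x hx0]
    exact lt_of_mul_lt_mul_right this (by positivity)
  rw [Pi.zero_apply, hode.deriv_deriv_eq hqx.ne', show deriv q x = -(μ * K) by linarith]
  have hxK' : K ^ 2 * (3 * a * q x + 1) ≤ x * K * (3 * a * q x + 1) := by
    gcongr
    nlinarith
  field_simp
  nlinarith [mul_pos hμ (sub_pos.2 (hlt'.trans_le hxK'))]

/-- The left side vanishes at `0` and, by the equation, has derivative `3 a q + log q`. -/
theorem three_mul_deriv_add_le (hode : ProfileODE a μ q) (ha : 0 ≤ a) (hd : Differentiable ℝ q)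
    (hd' : Differentiable ℝ (deriv q)) (hpos : ∀ t, 0 < q t) (hle : ∀ t, 0 ≤ t → q t ≤ q 0)
    (h0 : deriv q 0 = 0) {t : ℝ} (ht : 0 ≤ t) :
    3 * deriv q t + t * (3 * a * q t + 3 * μ + log (q t)) ≤ t * (3 * a * q 0 + log (q 0)) := by
  set G := fun x => 3 * deriv q x + x * (3 * a * q x + 3 * μ + log (q x))
  have hG : ∀ x, HasDerivAt G (3 * a * q x + log (q x)) x := by
    intro x
    have hqx := (hd x).hasDerivAt
    refine ((hd' x).hasDerivAt.const_mul 3 |>.add <| (hasDerivAt_id' x).mul <|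
      ((hqx.const_mul (3 * a)).add_const (3 * μ)).add (hqx.log (hpos x).ne')).congr_deriv ?_
    rw [hode.deriv_deriv_eq (hpos x).ne', Pi.add_apply]
    field_simp
    ring
  have := (convex_Ici 0).image_sub_le_mul_sub_of_deriv_le (f := G)
    (fun x _ => (hG x).continuousAt.continuousWithinAt)
    (fun x _ => (hG x).differentiableAt.differentiableWithinAt)
    (C := 3 * a * q 0 + log (q 0)) (fun x hx => ?_) 0 self_mem_Ici t ht ht
  · simpa [G, h0, mul_comm t] using this
  · rw [interior_Ici] at hx
    rw [(hG x).deriv]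
    have hqx := hle x hx.le
    gcongr
    exact hpos x

theorem hasDerivAt_profileFunctional (hode : ProfileODE a μ q) (hd : Differentiable ℝ q)
    (hd' : Differentiable ℝ (deriv q)) {t : ℝ} (hqt : q t ≠ 0) (ht : t ≠ 0) :
    HasDerivAt (profileFunctional a μ q) (-3 * deriv q t / t ^ 2) t := by
  have hqt' := (hd t).hasDerivAt
  refine (((hqt'.log hqt).add (hqt'.const_mul (3 * a))).add
    ((hasDerivAt_log ht).const_mul (3 * μ))).add (((hd' t).hasDerivAt.const_mul 3).div
      (hasDerivAt_id' t) ht) |>.congr_deriv ?_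
  rw [hode.deriv_deriv_eq hqt]
  field_simp
  ring

theorem monotoneOn_profileFunctional (hode : ProfileODE a μ q) (hd : Differentiable ℝ q)
    (hd' : Differentiable ℝ (deriv q)) (hpos : ∀ t, 0 < q t)
    (hq' : ∀ t, 0 ≤ t → deriv q t ≤ 0) : MonotoneOn (profileFunctional a μ q) (Ioi 0) := by
  have hΦ : ∀ t ∈ Ioi (0 : ℝ), HasDerivAt (profileFunctional a μ q) (-3 * deriv q t / t ^ 2) t :=
    fun t ht => hode.hasDerivAt_profileFunctional hd hd' (hpos t).ne' (ne_of_gt ht)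
  refine monotoneOn_of_deriv_nonneg (convex_Ioi 0)
    (fun t ht => (hΦ t ht).continuousAt.continuousWithinAt)
    (fun t ht => (hΦ t (interior_subset ht)).differentiableAt.differentiableWithinAt)
    fun t ht => ?_
  rw [interior_Ioi] at ht
  rw [(hΦ t ht).deriv]
  have : 0 ≤ -3 * deriv q t := by linarith [hq' t ht.le]
  positivity

theorem antitoneOn_profileFunctional_add (hode : ProfileODE a μ q) (hd : Differentiable ℝ q)
    (hd' : Differentiable ℝ (deriv q)) (hpos : ∀ t, 0 < q t)
    (hq' : ∀ t, 0 ≤ t → deriv q t ≤ 0) :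
    AntitoneOn (fun t => profileFunctional a μ q t + 3 * q t) (Ici 1) := by
  have hΦ : ∀ t ∈ Ici (1 : ℝ), HasDerivAt (fun t => profileFunctional a μ q t + 3 * q t)
      (-3 * deriv q t / t ^ 2 + 3 * deriv q t) t := fun t ht =>
    (hode.hasDerivAt_profileFunctional hd hd' (hpos t).ne' (by linarith [mem_Ici.1 ht])).add
      ((hd t).hasDerivAt.const_mul 3)
  refine antitoneOn_of_deriv_nonpos (convex_Ici 1)
    (fun t ht => (hΦ t ht).continuousAt.continuousWithinAt)
    (fun t ht => (hΦ t (interior_subset ht)).differentiableAt.differentiableWithinAt)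
    fun t ht => ?_
  rw [interior_Ici] at ht
  have ht1 : 1 < t := ht
  rw [(hΦ t ht1.le).deriv]
  have hq't := hq' t (by linarith)
  have ht2 : 1 / t ^ 2 ≤ 1 := by
    rw [div_le_one (pow_pos (by linarith) 2)]
    exact one_le_pow₀ ht1.le
  rw [show -3 * deriv q t / t ^ 2 + 3 * deriv q t = 3 * deriv q t * (1 - 1 / t ^ 2) by ring]
  exact mul_nonpos_of_nonpos_of_nonneg (by linarith) (by linarith)

end ProfileODE

theorem stmt_17_general (a μ A : ℝ) (ha : 0 < a) (hμ : 1 / 3 < μ)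
    (q : ℝ → ℝ) (hq : ContDiff ℝ 2 q)
    (hode : ∀ s : ℝ, deriv (deriv q) s * q s + a * s * deriv q s * q s
      + μ * q s + (1 / 3) * s * deriv q s = 0)
    (hq0 : q 0 = A) (hq0' : deriv q 0 = 0)
    (hpos : ∀ s : ℝ, 0 < q s)
    (hanti : StrictAntiOn q (Set.Ioi 0)) :
    ∀ s : ℝ, 1 ≤ s →
      q 1 * Real.exp (3 * a * q 1)
          / (s ^ (3 * μ) * Real.exp (3 * μ + (3 * μ / s) * Real.sqrt (3 * A / (1 + 3 * a * A))))
        < q s * Real.exp (3 * a * q s) ∧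
      q s * Real.exp (3 * a * q s)
        ≤ A * Real.exp (3 * A * (1 + a))
          / (s ^ (3 * μ) * Real.exp (3 * μ - (3 * μ / s) * Real.sqrt (3 * A / (1 + 3 * a * A)))) := by
  intro s hs
  subst hq0
  have hs0 : 0 < s := by linarith
  change ProfileODE a μ q at hode
  have hd := hq.differentiable two_ne_zero
  have hd' := hq.differentiable_deriv_two
  have hlt : ∀ t, 0 < t → q t < q 0 := fun t ht => hanti.apply_lt_of_Ioi hd ht
  have hle : ∀ t, 0 ≤ t → q t ≤ q 0 := fun t ht =>
    ht.eq_or_lt.elim (fun h => h ▸ le_rfl) fun h => (hlt t h).le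
  have hq' : ∀ t, 0 ≤ t → deriv q t ≤ 0 := fun t ht =>
    ht.eq_or_lt.elim (fun h => h ▸ hq0'.le) fun h =>
      hanti.antitoneOn.deriv_nonpos_of_isOpen isOpen_Ioi h
  set K := √(3 * q 0 / (1 + 3 * a * q 0))
  have hcorr : 0 < 3 * μ / s * K := by
    have : 0 < K := sqrt_pos.2 (by have := hpos 0; positivity)
    have : 0 < μ := by linarith
    positivity
  have hKs : -(deriv q s / s) ≤ μ * K / s := by
    rw [← neg_div]
    gcongr
    exact hode.neg_deriv_le_mul_sqrt ha.le (by linarith) hd' hpos hq' hq0' hlt hs0.le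
  have hq's : deriv q s / s ≤ 0 := div_nonpos_of_nonpos_of_nonneg (hq' s hs0.le) hs0.le
  have hq'1 := hode.neg_deriv_le_mul ha.le hd' hpos hq' hq0' zero_le_one
  have hq1 := hode.three_mul_deriv_add_le ha.le hd hd' hpos hle hq0' zero_le_one
  have hlow := hode.monotoneOn_profileFunctional hd hd' hpos hq' (mem_Ioi.2 one_pos)
    (mem_Ioi.2 hs0) hs
  have hupp := hode.antitoneOn_profileFunctional_add hd hd' hpos hq' self_mem_Ici hs hs
  simp only [profileFunctional, log_one, mul_zero, add_zero, div_one, mul_div_assoc] at hlow hupp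
  rw [mul_exp_div_rpow_mul_exp (hpos 1) hs0, mul_exp_div_rpow_mul_exp (hpos 0) hs0,
    mul_exp_eq_exp_log_add (hpos s), exp_lt_exp, exp_le_exp]
  have : 3 * μ / s * K = 3 * (μ * K / s) := by ring
  constructor
  · linarith
  · linarith [hle 1 zero_le_one, hpos s]

theorem stmt_17 (a μ A : ℝ) (ha : 0 < a) (hμ : 1 / 3 < μ) (hA : 0 < A)
    (q : ℝ → ℝ) (hq : ContDiff ℝ 2 q)
    (hode : ∀ s : ℝ, deriv (deriv q) s * q s + a * s * deriv q s * q s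
      + μ * q s + (1 / 3) * s * deriv q s = 0)
    (hq0 : q 0 = A) (hq0' : deriv q 0 = 0)
    (hpos : ∀ s : ℝ, 0 < q s)
    (heven : ∀ s : ℝ, q (-s) = q s)
    (hanti : StrictAntiOn q (Set.Ioi 0))
    (hlim : Tendsto q atTop (nhds 0)) (hlim' : Tendsto (deriv q) atTop (nhds 0))
    (hint : Integrable q) :
    ∀ s : ℝ, 1 ≤ s →
      q 1 * Real.exp (3 * a * q 1)
          / (s ^ (3 * μ) * Real.exp (3 * μ + (3 * μ / s) * Real.sqrt (3 * A / (1 + 3 * a * A))))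
        < q s * Real.exp (3 * a * q s) ∧
      q s * Real.exp (3 * a * q s)
        ≤ A * Real.exp (3 * A * (1 + a))
          / (s ^ (3 * μ) * Real.exp (3 * μ - (3 * μ / s) * Real.sqrt (3 * A / (1 + 3 * a * A)))) :=
  stmt_17_general a μ A ha hμ q hq hode hq0 hq0' hpos hanti
end

section
/- The function I : (0, ∞) → ℝ defined by I(A) = ∫_{-∞}^{∞} q(s; A) ds is continuous on (0, ∞). -/
open MeasureTheory Filter Real

/-!
Continuity follows from dominated convergence once `q(s; A) ≤ C (1 + |s|)^(-k)` with `k > 1`,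
uniformly for `A` in a compact neighbourhood of `A₀`. By Dini's theorem `q(s; A) ≤ ε` for
`s ≥ S`, uniformly in `A`. Taking `1 < k < 3μ` and `μ = k/3 + 2akε`, the equation makes the barrier
`φ = s q' + k q` decrease at rate at least `akεS` on `[S, ∞)` wherever `φ ≥ 0`; since
`φ(S) ≤ kε`, `φ ≤ 0` from `T = S + 1/(aS)` on, i.e. `s^k q(s)` is nonincreasing there.
-/

open Set Topology

theorem nonpos_of_deriv_le_neg_of_nonneg {φ φ' : ℝ → ℝ} {b t c : ℝ} (hc : 0 < c)
    (hφ : ∀ x ∈ Icc b t, HasDerivAt φ (φ' x) x) (hdecay : ∀ x ∈ Icc b t, 0 ≤ φ x → φ' x ≤ -c)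
    (hbt : b ≤ t) (hb : φ b ≤ c * (t - b)) : φ t ≤ 0 := by
  have hcont : ContinuousOn φ (Icc b t) := fun x hx => (hφ x hx).continuousAt.continuousWithinAt
  by_contra! ht
  -- `φ` cannot cross zero upwards, so it stays positive on `[b, t]`
  have hpos : ∀ x ∈ Icc b t, 0 < φ x := by
    intro x hx
    by_contra! hx0
    have hsub : Icc x t ⊆ Icc b t := Icc_subset_Icc_left hx.1
    have := image_le_of_deriv_right_lt_deriv_boundary (hcont.mono hsub)
      (fun y hy => (hφ y (hsub (Ico_subset_Icc_self hy))).hasDerivWithinAt) hx0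
      (fun _ => hasDerivAt_const _ (0 : ℝ))
      (fun y hy hy0 =>
        (hdecay y (hsub (Ico_subset_Icc_self hy)) hy0.ge).trans_lt (neg_neg_of_pos hc))
      ⟨hx.2, le_rfl⟩
    linarith
  have := image_le_of_deriv_right_le_deriv_boundary hcont
    (fun y hy => (hφ y (Ico_subset_Icc_self hy)).hasDerivWithinAt) (le_of_eq (by ring))
    (B := fun x => φ b - c * (x - b)) (by fun_prop)
    (fun x _ => ((((hasDerivAt_id x).sub_const b).const_mul c).const_sub (φ b)).hasDerivWithinAt)
    (fun y hy => by
      simpa using hdecay y (Ico_subset_Icc_self hy) (hpos y (Ico_subset_Icc_self hy)).le)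
    ⟨hbt, le_rfl⟩
  linarith

theorem antitoneOn_rpow_mul {f f' : ℝ → ℝ} {k b : ℝ} (hb : 0 < b)
    (hf : ∀ x ∈ Ici b, HasDerivAt f (f' x) x) (h : ∀ x ∈ Ici b, x * f' x + k * f x ≤ 0) :
    AntitoneOn (fun x => x ^ k * f x) (Ici b) := by
  have hderiv : ∀ x ∈ Ici b, HasDerivAt (fun x => x ^ k * f x)
      (x ^ (k - 1) * (x * f' x + k * f x)) x := by
    intro x hx
    have hx0 : 0 < x := hb.trans_le hx
    refine ((hasDerivAt_rpow_const (p := k) (Or.inl hx0.ne')).mul (hf x hx)).congr_deriv ?_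
    rw [show x ^ k = x ^ (k - 1) * x by rw [← rpow_add_one hx0.ne']; ring_nf]
    ring
  refine antitoneOn_of_deriv_nonpos (convex_Ici b)
    (fun x hx => (hderiv x hx).continuousAt.continuousWithinAt) (fun x hx => ?_) (fun x hx => ?_)
  all_goals rw [interior_Ici] at hx
  · exact (hderiv x (Ioi_subset_Ici_self hx)).differentiableAt.differentiableWithinAt
  · rw [(hderiv x (Ioi_subset_Ici_self hx)).deriv]
    exact mul_nonpos_of_nonneg_of_nonpos (rpow_nonneg (hb.trans hx).le _)
      (h x (Ioi_subset_Ici_self hx))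

theorem IsCompact.exists_forall_le_of_antitoneOn {X : Type*} [TopologicalSpace X] {K : Set X}
    (hK : IsCompact K) {F : ℝ → X → ℝ} (hcont : ∀ s, ContinuousOn (F s) K)
    (hanti : ∀ x ∈ K, AntitoneOn (F · x) (Ioi 0)) (hlim : ∀ x ∈ K, Tendsto (F · x) atTop (𝓝 0))
    {ε : ℝ} (hε : 0 < ε) : ∃ S, 1 ≤ S ∧ ∀ x ∈ K, ∀ s, S ≤ s → F s x ≤ ε := by
  have hunif : TendstoUniformlyOn (fun n : ℕ => F (n + 1)) 0 atTop K :=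
    Antitone.tendstoUniformlyOn_of_forall_tendsto hK (fun n => hcont _)
      (fun x hx m n hmn => hanti x hx (mem_Ioi.2 (Nat.cast_add_one_pos m))
        (mem_Ioi.2 (Nat.cast_add_one_pos n)) (by gcongr))
      continuousOn_const
      (fun x hx => (hlim x hx).comp (tendsto_natCast_atTop_atTop.atTop_add tendsto_const_nhds))
  obtain ⟨N, hN⟩ := (Metric.tendstoUniformlyOn_iff.mp hunif ε hε).exists
  have hN1 : (1 : ℝ) ≤ N + 1 := by linarith [N.cast_nonneg (α := ℝ)]
  refine ⟨N + 1, hN1, fun x hx s hs => ?_⟩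
  calc F s x ≤ F (N + 1) x :=
        hanti x hx (mem_Ioi.2 (Nat.cast_add_one_pos N)) (mem_Ioi.2 (by linarith)) hs
    _ ≤ ε := by
      have := hN x hx
      rw [Pi.zero_apply, dist_zero_left, Real.norm_eq_abs] at this
      exact (le_abs_self _).trans this.le

theorem le_mul_one_add_rpow_neg {g : ℝ → ℝ} {M C T k : ℝ} (hT : 1 ≤ T) (hk : 0 ≤ k)
    (hg : ∀ s, 0 ≤ s → 0 ≤ g s) (hM : ∀ s, 0 ≤ s → g s ≤ M)
    (hC : ∀ s, T ≤ s → s ^ k * g s ≤ C) (s : ℝ) (hs : 0 ≤ s) :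
    g s ≤ (M * (1 + T) ^ k + 2 ^ k * C) * (1 + s) ^ (-k) := by
  have hM0 : 0 ≤ M := (hg 0 le_rfl).trans (hM 0 le_rfl)
  have hC0 : 0 ≤ C :=
    (mul_nonneg (rpow_nonneg (by linarith) k) (hg T (by linarith))).trans (hC T le_rfl)
  rw [rpow_neg (by linarith), ← div_eq_mul_inv, le_div_iff₀ (by positivity)]
  rcases le_total s T with hsT | hTs
  · calc g s * (1 + s) ^ k ≤ M * (1 + T) ^ k :=
          mul_le_mul (hM s hs) (by gcongr) (by positivity) hM0
      _ ≤ _ := le_add_of_nonneg_right (by positivity)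
  · calc g s * (1 + s) ^ k ≤ g s * (2 * s) ^ k := by
          gcongr
          · exact hg s hs
          · linarith
      _ = 2 ^ k * (s ^ k * g s) := by rw [mul_rpow zero_le_two hs]; ring
      _ ≤ 2 ^ k * C := by gcongr; exact hC s hTs
      _ ≤ _ := le_add_of_nonneg_left (by positivity)

theorem ode_barrier_deriv_le {a μ k ε t x x' x'' : ℝ} (ha : 0 ≤ a) (hk : 0 ≤ k) (ht : 0 ≤ t)
    (hx : 0 < x) (hxε : x ≤ ε) (hx' : x' ≤ 0) (hμ : μ = k / 3 + 2 * a * k * ε)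
    (hode : x'' * x + a * t * x' * x + μ * x + 1 / 3 * t * x' = 0)
    (hbarrier : 0 ≤ t * x' + k * x) :
    (k + 1) * x' + t * x'' ≤ -(a * k * ε * t) := by
  refine le_of_mul_le_mul_right ?_ hx
  have hdrift : a * t * x * (-(t * x')) ≤ a * t * x * (k * ε) :=
    mul_le_mul_of_nonneg_left (by nlinarith) (by positivity)
  have hlinear : t / 3 * (-(t * x')) ≤ t / 3 * (k * x) :=
    mul_le_mul_of_nonneg_left (by linarith) (by positivity)
  have hfirst : (k + 1) * x' * x ≤ 0 := mul_nonpos_of_nonpos_of_nonneg (by nlinarith) hx.le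
  subst hμ
  linear_combination t * hode + hfirst + hdrift + hlinear

theorem rpow_mul_le_of_ode {f : ℝ → ℝ} {a μ k ε S T : ℝ} (ha : 0 < a) (hk : 0 < k) (hε : 0 < ε)
    (hS : 0 < S) (hT : 1 ≤ a * S * (T - S)) (hμ : μ = k / 3 + 2 * a * k * ε) (hf : ContDiff ℝ 2 f)
    (hode : ∀ s, deriv (deriv f) s * f s + a * s * deriv f s * f s + μ * f s
      + 1 / 3 * s * deriv f s = 0)
    (hpos : ∀ s, 0 < f s) (hderiv : ∀ s, 0 < s → deriv f s ≤ 0) (hsmall : ∀ s, S ≤ s → f s ≤ ε) :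
    ∀ s, T ≤ s → s ^ k * f s ≤ T ^ k * ε := by
  have hf' : Differentiable ℝ f := hf.differentiable two_ne_zero
  have hf'' : Differentiable ℝ (deriv f) :=
    (contDiff_succ_iff_deriv.mp (show ContDiff ℝ (1 + 1) f from hf)).2.2.differentiable
      one_ne_zero
  have hST : S ≤ T := by
    by_contra! h
    nlinarith [mul_nonneg (mul_pos ha hS).le (sub_nonneg.2 h.le)]
  set φ : ℝ → ℝ := fun t => t * deriv f t + k * f t
  have hφ : ∀ t, HasDerivAt φ ((k + 1) * deriv f t + t * deriv (deriv f) t) t := fun t =>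
    (((hasDerivAt_id t).mul (hf'' t).hasDerivAt).add ((hf' t).hasDerivAt.const_mul k)).congr_deriv
      (by simp only [id]; ring)
  have hdecay : ∀ t ∈ Ici S, 0 ≤ φ t →
      (k + 1) * deriv f t + t * deriv (deriv f) t ≤ -(a * k * ε * S) := by
    intro t ht hφt
    have ht0 : 0 < t := hS.trans_le ht
    calc (k + 1) * deriv f t + t * deriv (deriv f) t ≤ -(a * k * ε * t) :=
          ode_barrier_deriv_le ha.le hk.le ht0.le (hpos t) (hsmall t ht) (hderiv t ht0) hμ
            (hode t) hφt
      _ ≤ -(a * k * ε * S) := by gcongr; exact ht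
  have hφS : φ S ≤ k * ε := by
    have := mul_nonpos_of_nonneg_of_nonpos hS.le (hderiv S hS)
    have := mul_le_mul_of_nonneg_left (hsmall S le_rfl) hk.le
    linarith
  have hφ_nonpos : ∀ t ∈ Ici T, φ t ≤ 0 := by
    intro t ht
    refine nonpos_of_deriv_le_neg_of_nonneg (by positivity) (fun x _ => hφ x)
      (fun x hx => hdecay x hx.1) (hST.trans ht) (hφS.trans ?_)
    calc k * ε ≤ k * ε * (a * S * (T - S)) := le_mul_of_one_le_right (by positivity) hT
      _ = a * k * ε * S * (T - S) := by ring
      _ ≤ a * k * ε * S * (t - S) := by gcongr; exact ht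
  intro s hs
  calc s ^ k * f s ≤ T ^ k * f T :=
        antitoneOn_rpow_mul (hS.trans_le hST) (fun x _ => (hf' x).hasDerivAt) hφ_nonpos
          self_mem_Ici hs hs
    _ ≤ T ^ k * ε := mul_le_mul_of_nonneg_left (hsmall T hST) (rpow_nonneg (hS.le.trans hST) k)

theorem le_mul_one_add_abs_rpow_neg_of_ode {f : ℝ → ℝ} {a μ k ε S T M : ℝ} (ha : 0 < a)
    (hk : 0 < k) (hε : 0 < ε) (hS : 0 < S) (hT₁ : 1 ≤ T) (hT : 1 ≤ a * S * (T - S))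
    (hμ : μ = k / 3 + 2 * a * k * ε) (hf : ContDiff ℝ 2 f)
    (hode : ∀ s, deriv (deriv f) s * f s + a * s * deriv f s * f s + μ * f s
      + 1 / 3 * s * deriv f s = 0)
    (hpos : ∀ s, 0 < f s) (heven : ∀ s, f (-s) = f s) (hanti : AntitoneOn f (Ioi 0))
    (hM : f 0 ≤ M) (hsmall : ∀ s, S ≤ s → f s ≤ ε) (s : ℝ) :
    f s ≤ (M * (1 + T) ^ k + 2 ^ k * (T ^ k * ε)) * (1 + |s|) ^ (-k) := by
  have hderiv : ∀ t, 0 < t → deriv f t ≤ 0 := fun t ht =>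
    derivWithin_of_isOpen (f := f) isOpen_Ioi ht ▸ hanti.derivWithin_nonpos
  have hanti₀ : AntitoneOn f (Ici 0) :=
    antitoneOn_of_deriv_nonpos (convex_Ici 0) hf.continuous.continuousOn
      (hf.differentiable two_ne_zero).differentiableOn (by rw [interior_Ici]; exact hderiv)
  have habs : f s = f |s| := by
    rcases abs_choice s with h | h <;> rw [h]
    exact (heven s).symm
  rw [habs]
  exact le_mul_one_add_rpow_neg hT₁ hk.le (fun t _ => (hpos t).le)
    (fun t ht => (hanti₀ self_mem_Ici ht ht).trans hM)
    (rpow_mul_le_of_ode ha hk hε hS hT hμ hf hode hpos hderiv hsmall) |s| (abs_nonneg s)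

theorem stmt_18_general (a μ : ℝ) (ha : 0 < a) (hμ : 1 / 3 < μ)
    (q : ℝ → ℝ → ℝ)
    (hq : ∀ A : ℝ, 0 < A → ContDiff ℝ 2 (fun s => q s A))
    (hode : ∀ A : ℝ, 0 < A → ∀ s : ℝ,
      deriv (deriv (fun s => q s A)) s * q s A
        + a * s * deriv (fun s => q s A) s * q s A
        + μ * q s A + (1 / 3) * s * deriv (fun s => q s A) s = 0)
    (hq0 : ∀ A : ℝ, 0 < A → q 0 A = A)
    (hpos : ∀ A : ℝ, 0 < A → ∀ s : ℝ, 0 < q s A)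
    (heven : ∀ A : ℝ, 0 < A → ∀ s : ℝ, q (-s) A = q s A)
    (hanti : ∀ A : ℝ, 0 < A → StrictAntiOn (fun s => q s A) (Set.Ioi 0))
    (hlim : ∀ A : ℝ, 0 < A → Tendsto (fun s => q s A) atTop (nhds 0))
    (hcont : ∀ s : ℝ, ContinuousOn (fun A => q s A) (Set.Ioi 0)) :
    ContinuousOn (fun A : ℝ => ∫ s : ℝ, q s A) (Set.Ioi 0) := by
  obtain ⟨k, ε, hk, hε, hμk⟩ : ∃ k ε : ℝ, 1 < k ∧ 0 < ε ∧ μ = k / 3 + 2 * a * k * ε :=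
    ⟨(3 * μ + 1) / 2, (3 * μ - 1) / (12 * a * ((3 * μ + 1) / 2)), by linarith,
      div_pos (by linarith) (by positivity), by field_simp; ring⟩
  intro A₀ hA₀
  have hK : Icc (A₀ / 2) (A₀ + 1) ⊆ Ioi 0 := fun A hA => (half_pos hA₀).trans_le hA.1
  obtain ⟨S, hS, hsmall⟩ := isCompact_Icc.exists_forall_le_of_antitoneOn
    (fun s => (hcont s).mono hK) (fun A hA => (hanti A (hK hA)).antitoneOn)
    (fun A hA => hlim A (hK hA)) hε
  set T := S + (a * S)⁻¹
  have hT₁ : 1 ≤ T := le_add_of_le_of_nonneg hS (by positivity)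
  have hT : 1 ≤ a * S * (T - S) := by simp only [T, add_sub_cancel_left]; field_simp; rfl
  refine continuousWithinAt_of_dominated (bound := fun s =>
      ((A₀ + 1) * (1 + T) ^ k + 2 ^ k * (T ^ k * ε)) * (1 + ‖s‖) ^ (-k))
    (eventually_nhdsWithin_of_forall fun A hA => (hq A hA).continuous.aestronglyMeasurable)
    ?_ ((integrable_one_add_norm (by simpa using hk)).const_mul _)
    (ae_of_all _ fun s => hcont s A₀ hA₀)
  filter_upwards [nhdsWithin_le_nhds (Icc_mem_nhds (half_lt_self hA₀) (lt_add_one A₀))]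
    with A hA
  refine ae_of_all _ fun s => ?_
  rw [norm_of_nonneg (hpos A (hK hA) s).le, norm_eq_abs]
  exact le_mul_one_add_abs_rpow_neg_of_ode ha (by linarith) hε (by linarith) hT₁ hT hμk
    (hq A (hK hA)) (hode A (hK hA)) (hpos A (hK hA)) (heven A (hK hA))
    (hanti A (hK hA)).antitoneOn ((hq0 A (hK hA)).trans_le hA.2) (hsmall A hA) s

theorem stmt_18 (a μ : ℝ) (ha : 0 < a) (hμ : 1 / 3 < μ)
    (q : ℝ → ℝ → ℝ)
    (hq : ∀ A : ℝ, 0 < A → ContDiff ℝ 2 (fun s => q s A))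
    (hode : ∀ A : ℝ, 0 < A → ∀ s : ℝ,
      deriv (deriv (fun s => q s A)) s * q s A
        + a * s * deriv (fun s => q s A) s * q s A
        + μ * q s A + (1 / 3) * s * deriv (fun s => q s A) s = 0)
    (hq0 : ∀ A : ℝ, 0 < A → q 0 A = A)
    (hq0' : ∀ A : ℝ, 0 < A → deriv (fun s => q s A) 0 = 0)
    (hpos : ∀ A : ℝ, 0 < A → ∀ s : ℝ, 0 < q s A)
    (heven : ∀ A : ℝ, 0 < A → ∀ s : ℝ, q (-s) A = q s A)
    (hanti : ∀ A : ℝ, 0 < A → StrictAntiOn (fun s => q s A) (Set.Ioi 0))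
    (hbd : ∀ A : ℝ, 0 < A → ∀ s : ℝ,
      |deriv (fun s => q s A) s| ≤ μ * Real.sqrt (3 * A / (1 + 3 * a * A)))
    (hlim : ∀ A : ℝ, 0 < A → Tendsto (fun s => q s A) atTop (nhds 0))
    (hint : ∀ A : ℝ, 0 < A → Integrable (fun s => q s A))
    (hcont : ∀ s : ℝ, ContinuousOn (fun A => q s A) (Set.Ioi 0)) :
    ContinuousOn (fun A : ℝ => ∫ s : ℝ, q s A) (Set.Ioi 0) :=
  stmt_18_general a μ ha hμ q hq hode hq0 hpos heven hanti hlim hcont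
end
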